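/- arXiv:1312.4753 — 5 statements merged into one kernel-verified Lean document; each statement's English description precedes it below -/
import Mathlib

section
/- Let W be a Banach representation of a p-adic Lie group G with a fixed exhaustive decreasing sequence of open subgroups Γ_m. If w ∈ W is a locally analytic vector, then for all sufficiently large m, the Γ_m-analytic norm of w equals its Banach norm: ‖w‖_{Γ_m} = ‖w‖. -/
/-!
Let `b` be the coefficients of a `Γ_{n₀}`-expansion of `w`. On `Γ_n` the coordinates satisfy
`c_{n₀} = p^{n-n₀} c_n`, so `p^{(n-n₀)|k|} b_k` are coefficients of a `Γ_n`-expansion, and they are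
the only ones: one level deeper every expansion with bounded coefficients converges absolutely,
and an absolutely convergent power series on `ℤ_p^d` determines its coefficients. Evaluating at
`1` gives `a_0 = w`, while `‖a_k‖ ≤ p^{-(n-n₀)} sup ‖b‖` for `k ≠ 0`, which is `≤ ‖w‖` once `n` is
large.
-/

open Filter Finset

theorem summable_prod_pow {ι : Type*} [Fintype ι] {r : ℝ} (h0 : 0 ≤ r) (h1 : r < 1) :
    Summable fun k : ι → ℕ => ∏ i, r ^ k i := by
  classical
  have hgeom := summable_geometric_of_lt_one h0 h1
  refine summable_of_sum_le (c := ∏ _ : ι, ∑' n, r ^ n) (fun _ => by positivity) fun T => ?_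
  set N := T.sup (fun k => univ.sup k) + 1
  have hT : T ⊆ Fintype.piFinset fun _ => range N := fun k hk => by
    simp only [Fintype.mem_piFinset, mem_range]
    exact fun i => Nat.lt_succ_of_le ((le_sup (f := k) (mem_univ i)).trans
      (le_sup (f := fun k => univ.sup k) hk))
  calc ∑ k ∈ T, ∏ i, r ^ k i
      ≤ ∑ k ∈ Fintype.piFinset fun _ => range N, ∏ i, r ^ k i :=
        sum_le_sum_of_subset_of_nonneg hT fun _ _ _ => by positivity
    _ = ∏ _ : ι, ∑ n ∈ range N, r ^ n := (prod_univ_sum _ _).symm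
    _ ≤ ∏ _ : ι, ∑' n, r ^ n :=
        prod_le_prod (fun _ _ => by positivity) fun _ _ =>
          hgeom.sum_le_tsum _ fun _ _ => by positivity

theorem prod_cons_pow {R : Type*} [CommMonoid R] {d : ℕ} (t : R) (y : Fin d → R) (m : ℕ)
    (k : Fin d → ℕ) :
    ∏ i, (Fin.cons t y : Fin (d + 1) → R) i ^ (Fin.cons m k : Fin (d + 1) → ℕ) i =
      t ^ m * ∏ i, y i ^ k i := by
  simp [Fin.prod_univ_succ]

section NormedSpace

variable {𝕜 E : Type*} [NormedField 𝕜] [SeminormedAddCommGroup E] [NormedSpace 𝕜 E]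
  {ι : Type*} [Fintype ι] {t : 𝕜}

theorem summable_norm_pow_sum_smul (ht : ‖t‖ < 1)
    {a : (ι → ℕ) → E} (ha : BddAbove (Set.range fun k => ‖a k‖)) :
    Summable fun k => ‖t ^ (∑ i, k i) • a k‖ := by
  obtain ⟨C, hC⟩ := ha
  refine ((summable_prod_pow (norm_nonneg t) ht).mul_left C).of_nonneg_of_le
    (fun _ => norm_nonneg _) fun k => ?_
  rw [norm_smul, norm_pow, ← prod_pow_eq_pow_sum, mul_comm]
  exact mul_le_mul_of_nonneg_right (hC ⟨k, rfl⟩) (by positivity)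

theorem eventually_norm_pow_pow_smul_le (ht : ‖t‖ < 1)
    {b : (ι → ℕ) → E} (hb : BddAbove (Set.range fun k => ‖b k‖)) {r : ℝ} (hr : 0 < r) :
    ∀ᶠ j in atTop, ∀ k ≠ 0, ‖(t ^ j) ^ (∑ i, k i) • b k‖ ≤ r := by
  obtain ⟨C, hC⟩ := hb
  have hC0 : 0 ≤ C := (norm_nonneg _).trans (hC ⟨0, rfl⟩)
  have hlim : Tendsto (fun j => ‖t‖ ^ j * C) atTop (nhds 0) := by
    simpa using (tendsto_pow_atTop_nhds_zero_of_lt_one (norm_nonneg t) ht).mul_const C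
  filter_upwards [hlim.eventually_le_const hr] with j hj k hk
  have hk : ∑ i, k i ≠ 0 := fun h => hk (funext fun i => sum_eq_zero_iff.1 h i (mem_univ i))
  calc ‖(t ^ j) ^ (∑ i, k i) • b k‖ = (‖t‖ ^ j) ^ (∑ i, k i) * ‖b k‖ := by
        rw [norm_smul, norm_pow, norm_pow]
    _ ≤ ‖t‖ ^ j * C := mul_le_mul (pow_le_of_le_one (by positivity)
        (pow_le_one₀ (norm_nonneg _) ht.le) hk) (hC ⟨k, rfl⟩) (norm_nonneg _) (by positivity)
    _ ≤ r := hj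

end NormedSpace

section PowerSeries

variable {p : ℕ} [Fact p.Prime] {W : Type*} [NormedAddCommGroup W] [NormedSpace ℚ_[p] W]

theorem norm_padicInt_smul_le (t : ℤ_[p]) (x : W) : ‖(t : ℚ_[p]) • x‖ ≤ ‖x‖ := by
  rw [norm_smul, PadicInt.padic_norm_e_of_padicInt]
  exact mul_le_of_le_one_left (norm_nonneg x) t.norm_le_one

theorem norm_tsum_padicInt_smul_le {ι : Type*} {e : ι → W} (he : Summable fun k => ‖e k‖)
    (t : ι → ℤ_[p]) : ‖∑' k, (t k : ℚ_[p]) • e k‖ ≤ ∑' k, ‖e k‖ := by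
  have hs : Summable fun k => ‖(t k : ℚ_[p]) • e k‖ :=
    he.of_nonneg_of_le (fun _ => norm_nonneg _) fun _ => norm_padicInt_smul_le _ _
  exact (norm_tsum_le_tsum_norm hs).trans (hs.tsum_le_tsum (fun _ => norm_padicInt_smul_le _ _) he)

def HasPowerSeriesExpansion {X : Type*} {d : ℕ} (c : X → Fin d → ℤ_[p]) (f : X → W)
    (a : (Fin d → ℕ) → W) : Prop :=
  ∀ x, f x = ∑' k, ((∏ i, c x i ^ k i : ℤ_[p]) : ℚ_[p]) • a k

namespace HasPowerSeriesExpansion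

variable {X : Type*} {d : ℕ} {c : X → Fin d → ℤ_[p]} {f : X → W} {a : (Fin d → ℕ) → W}

theorem apply_eq_coeff_zero (ha : HasPowerSeriesExpansion c f a) {x : X} (hx : c x = 0) :
    f x = a 0 := by
  rw [ha x, hx, tsum_eq_single 0]
  · simp
  · intro k hk
    obtain ⟨i, hi⟩ := Function.ne_iff.1 hk
    rw [prod_eq_zero (mem_univ i) (zero_pow hi), PadicInt.coe_zero, zero_smul]

theorem comp_smul {Y : Type*} {c' : Y → Fin d → ℤ_[p]} (φ : Y → X) (t : ℤ_[p])
    (hφ : ∀ y, c (φ y) = fun i => t * c' y i) (ha : HasPowerSeriesExpansion c f a) :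
    HasPowerSeriesExpansion c' (f ∘ φ) fun k => (t : ℚ_[p]) ^ (∑ i, k i) • a k := by
  intro y
  simp only [Function.comp_apply, ha (φ y), hφ, mul_pow, prod_mul_distrib, prod_pow_eq_pow_sum,
    PadicInt.coe_mul, PadicInt.coe_pow, mul_smul]
  exact tsum_congr fun _ => smul_comm _ _ _

end HasPowerSeriesExpansion

variable [CompleteSpace W]

theorem summable_padicInt_smul {ι : Type*} {e : ι → W} (he : Summable fun k => ‖e k‖)
    (t : ι → ℤ_[p]) : Summable fun k => (t k : ℚ_[p]) • e k :=
  .of_norm_bounded he fun _ => norm_padicInt_smul_le _ _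

theorem eq_zero_of_tsum_pow_smul_eq_zero {b : ℕ → W} (hb : Summable fun m => ‖b m‖)
    (h : ∀ t : ℤ_[p], ∑' m, ((t ^ m : ℤ_[p]) : ℚ_[p]) • b m = 0) : b = 0 := by
  let P : FormalMultilinearSeries ℚ_[p] ℚ_[p] W := fun m =>
    ContinuousMultilinearMap.mkPiRing ℚ_[p] (Fin m) (b m)
  have hP : HasFPowerSeriesOnBall 0 P 0 1 := by
    refine ⟨?_, one_pos, fun {y} hy => ?_⟩
    · simpa using P.le_radius_of_summable_norm (r := 1) (by simpa [P] using hb)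
    · have hy1 : ‖y‖ ≤ 1 := by
        have := mem_eball_zero_iff.1 hy
        rw [← ofReal_norm, ENNReal.ofReal_lt_one] at this
        exact this.le
      let t : ℤ_[p] := ⟨y, hy1⟩
      have hsum := (summable_padicInt_smul hb fun m => t ^ m).hasSum
      rw [h t] at hsum
      simp only [PadicInt.coe_pow, show (t : ℚ_[p]) = y from rfl] at hsum
      simpa [P] using hsum
  funext m
  simpa [P] using congr($(hP.hasFPowerSeriesAt.eq_zero) m fun _ => 1)

theorem eq_zero_of_tsum_prod_pow_smul_eq_zero {d : ℕ} {e : (Fin d → ℕ) → W}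
    (he : Summable fun k => ‖e k‖)
    (h : ∀ y : Fin d → ℤ_[p], ∑' k, ((∏ i, y i ^ k i : ℤ_[p]) : ℚ_[p]) • e k = 0) : e = 0 := by
  induction d with
  | zero =>
    funext k
    have h0 := h 0
    simp only [(hasSum_unique _).tsum_eq, univ_eq_empty, prod_empty, PadicInt.coe_one,
      one_smul] at h0
    exact (congrArg e (Subsingleton.elim _ _)).trans h0
  | succ d ih =>
    have he' : Summable fun q : ℕ × (Fin d → ℕ) => ‖e (Fin.cons q.1 q.2)‖ :=
      (Fin.consEquiv fun _ => ℕ).summable_iff.2 he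
    have hfib (m : ℕ) : Summable fun k' => ‖e (Fin.cons m k')‖ := he'.prod_factor m
    suffices ∀ m, (fun k' => e (Fin.cons m k')) = 0 by
      funext k
      simpa using congrFun (this (k 0)) (Fin.tail k)
    intro m
    refine ih (hfib m) fun y => ?_
    -- the inner sums are the coefficients of a one-variable series vanishing on `ℤ_p`
    let b : ℕ → W := fun m => ∑' k', ((∏ i, y i ^ k' i : ℤ_[p]) : ℚ_[p]) • e (Fin.cons m k')
    refine congrFun (eq_zero_of_tsum_pow_smul_eq_zero (p := p) (b := b) ?_ fun t => ?_) m
    · refine he'.prod.of_nonneg_of_le (fun _ => norm_nonneg _) fun m => ?_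
      exact norm_tsum_padicInt_smul_le (hfib m) _
    · let F : (Fin (d + 1) → ℕ) → W := fun k =>
        ((∏ i, (Fin.cons t y : Fin (d + 1) → ℤ_[p]) i ^ k i : ℤ_[p]) : ℚ_[p]) • e k
      have hF : Summable F := summable_padicInt_smul he _
      calc ∑' m, ((t ^ m : ℤ_[p]) : ℚ_[p]) • b m
          = ∑' m, ∑' k', F (Fin.cons m k') := by
            refine tsum_congr fun m => ?_
            simp only [b, F, ← tsum_const_smul'', prod_cons_pow, PadicInt.coe_mul, mul_smul]
        _ = ∑' q : ℕ × (Fin d → ℕ), F (Fin.cons q.1 q.2) :=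
            ((Fin.consEquiv fun _ => ℕ).summable_iff.2 hF).tsum_prod.symm
        _ = ∑' k, F k := (Fin.consEquiv fun _ => ℕ).tsum_eq F
        _ = 0 := h _

theorem HasPowerSeriesExpansion.eq_of_surjective {X : Type*} {d : ℕ} {c : X → Fin d → ℤ_[p]}
    {f : X → W} {a b : (Fin d → ℕ) → W} (hc : Function.Surjective c)
    (ha : HasPowerSeriesExpansion c f a) (hb : HasPowerSeriesExpansion c f b)
    (ha' : Summable fun k => ‖a k‖) (hb' : Summable fun k => ‖b k‖) : a = b := by
  rw [← sub_eq_zero]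
  refine eq_zero_of_tsum_prod_pow_smul_eq_zero (p := p)
    ((ha'.add hb').of_nonneg_of_le (fun _ => norm_nonneg _) fun k => norm_sub_le _ _) fun y => ?_
  obtain ⟨x, rfl⟩ := hc y
  simp only [Pi.sub_apply, smul_sub]
  rw [(summable_padicInt_smul ha' _).tsum_sub (summable_padicInt_smul hb' _), ← ha x, ← hb x,
    sub_self]

section Levels

variable {G : Type*} [Group G] [DistribMulAction G W] {Γ : ℕ → Subgroup G} {d : ℕ}
  {c : ∀ n, Γ n → Fin d → ℤ_[p]} (hdec : ∀ n, Γ (n + 1) ≤ Γ n)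
  (hscale : ∀ (n : ℕ) (g : Γ (n + 1)),
    c n ⟨(g : G), hdec n g.2⟩ = fun i => (p : ℤ_[p]) * c (n + 1) g i)
include hscale

theorem coord_of_le {m n : ℕ} (hmn : m ≤ n) (g : Γ n) :
    c m ⟨g, antitone_nat_of_succ_le hdec hmn g.2⟩ = fun i => (p : ℤ_[p]) ^ (n - m) * c n g i := by
  induction n, hmn using Nat.le_induction with
  | base => simp
  | succ n hmn ih =>
    rw [ih ⟨g, hdec n g.2⟩, hscale n g]
    funext i
    rw [Nat.sub_add_comm hmn, pow_succ, mul_assoc]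

omit [CompleteSpace W] in
theorem HasPowerSeriesExpansion.of_le {w : W} {m n : ℕ} (hmn : m ≤ n) {a : (Fin d → ℕ) → W}
    (ha : HasPowerSeriesExpansion (c m) (fun g : Γ m => (g : G) • w) a) :
    HasPowerSeriesExpansion (c n) (fun g : Γ n => (g : G) • w)
      fun k => ((p : ℚ_[p]) ^ (n - m)) ^ (∑ i, k i) • a k := by
  have := ha.comp_smul (fun g : Γ n => ⟨g, antitone_nat_of_succ_le hdec hmn g.2⟩) _
    (coord_of_le hdec hscale hmn)
  push_cast at this
  exact this

theorem coeff_eq_of_le {w : W} {m n : ℕ} (hmn : m ≤ n) (hsurj : Function.Surjective (c (n + 1)))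
    {a b : (Fin d → ℕ) → W}
    (ha : HasPowerSeriesExpansion (c n) (fun g : Γ n => (g : G) • w) a)
    (ha' : BddAbove (Set.range fun k => ‖a k‖))
    (hb : HasPowerSeriesExpansion (c m) (fun g : Γ m => (g : G) • w) b)
    (hb' : BddAbove (Set.range fun k => ‖b k‖)) (k : Fin d → ℕ) :
    a k = ((p : ℚ_[p]) ^ (n - m)) ^ (∑ i, k i) • b k := by
  have hp {j : ℕ} (hj : j ≠ 0) : ‖(p : ℚ_[p]) ^ j‖ < 1 := by
    rw [norm_pow]
    exact pow_lt_one₀ (norm_nonneg _) Padic.norm_p_lt_one hj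
  -- one level deeper, both expansions converge absolutely
  have h := congrFun ((ha.of_le hdec hscale (Nat.le_add_right n 1)).eq_of_surjective hsurj
    (hb.of_le hdec hscale (hmn.trans (Nat.le_add_right n 1)))
    (summable_norm_pow_sum_smul (hp (by omega)) ha')
    (summable_norm_pow_sum_smul (hp (by omega)) hb')) k
  rw [Nat.add_sub_cancel_left, pow_one, Nat.sub_add_comm hmn, pow_succ, mul_pow, mul_comm,
    mul_smul] at h
  exact smul_right_injective W (pow_ne_zero _ (by exact_mod_cast (Fact.out : p.Prime).ne_zero)) h

end Levels

end PowerSeries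

theorem statement6_general (p d : ℕ) [Fact p.Prime]
    (G : Type*) [Group G]
    (W : Type*) [NormedAddCommGroup W] [NormedSpace ℚ_[p] W] [CompleteSpace W]
    [DistribMulAction G W]
    (Γ : ℕ → Subgroup G) (hdec : ∀ n, Γ (n + 1) ≤ Γ n)
    (c : ∀ n, Γ n → (Fin d → ℤ_[p])) (hcbij : ∀ n, Function.Bijective (c n))
    (hc1 : ∀ n, c n 1 = 0)
    (hscale : ∀ (n : ℕ) (g : Γ (n + 1)),
      c n ⟨(g : G), hdec n g.2⟩ = fun i => (p : ℤ_[p]) * c (n + 1) g i)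
    (w : W)
    (hw : ∃ n, ∃ a : (Fin d → ℕ) → W, Filter.Tendsto a Filter.cofinite (nhds 0) ∧
      ∀ g : Γ n, (g : G) • w = ∑' k : Fin d → ℕ, ((∏ i, c n g i ^ k i : ℤ_[p]) : ℚ_[p]) • a k) :
    ∃ M : ℕ, ∀ n, M ≤ n → ∀ a : (Fin d → ℕ) → W,
      Filter.Tendsto a Filter.cofinite (nhds 0) →
      (∀ g : Γ n, (g : G) • w =
        ∑' k : Fin d → ℕ, ((∏ i, c n g i ^ k i : ℤ_[p]) : ℚ_[p]) • a k) →
      (⨆ k : Fin d → ℕ, ‖a k‖) = ‖w‖ := by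
  obtain ⟨n₀, b, hb0, hb⟩ := hw
  have hbdd {a : (Fin d → ℕ) → W} (ha : Tendsto a cofinite (nhds 0)) :
      BddAbove (Set.range fun k => ‖a k‖) :=
    (tendsto_norm_zero.comp ha).bddAbove_range_of_cofinite
  have hcoeff {n : ℕ} (hn : n₀ ≤ n) {a : (Fin d → ℕ) → W} (ha0 : Tendsto a cofinite (nhds 0))
      (ha : HasPowerSeriesExpansion (c n) (fun g : Γ n => (g : G) • w) a) :
      ∀ k, a k = ((p : ℚ_[p]) ^ (n - n₀)) ^ (∑ i, k i) • b k :=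
    coeff_eq_of_le hdec hscale hn (hcbij _).2 ha (hbdd ha0) hb (hbdd hb0)
  have hsmall : ∀ᶠ n in atTop, ∀ k ≠ 0, ‖((p : ℚ_[p]) ^ (n - n₀)) ^ (∑ i, k i) • b k‖ ≤ ‖w‖ := by
    by_cases hw0 : w = 0
    · have hzero : HasPowerSeriesExpansion (c n₀) (fun g : Γ n₀ => (g : G) • w) 0 := fun g => by
        simp [hw0]
      have hb_zero : b = 0 := funext fun k => by
        simpa using (hcoeff le_rfl tendsto_const_nhds hzero k).symm
      simp [hb_zero, hw0]
    · exact (tendsto_sub_atTop_nat n₀).eventually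
        (eventually_norm_pow_pow_smul_le Padic.norm_p_lt_one (hbdd hb0) (norm_pos_iff.2 hw0))
  obtain ⟨M, hM⟩ := eventually_atTop.1 (hsmall.and (eventually_ge_atTop n₀))
  refine ⟨M, fun n hn a ha0 ha => ?_⟩
  obtain ⟨hb_small, hn₀⟩ := hM n hn
  have haw : a 0 = w := by
    simpa using (HasPowerSeriesExpansion.apply_eq_coeff_zero ha (hc1 n)).symm
  have hle (k : Fin d → ℕ) : ‖a k‖ ≤ ‖w‖ := by
    rcases eq_or_ne k 0 with rfl | hk
    · rw [haw]
    · rw [hcoeff hn₀ ha0 ha k]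
      exact hb_small k hk
  exact le_antisymm (ciSup_le hle)
    (le_ciSup_of_le ⟨‖w‖, Set.forall_mem_range.2 hle⟩ 0 (congrArg norm haw).ge)

/-- If `w` is a locally analytic vector of a Banach representation `W` of a
`p`-adic Lie group `G` with a decreasing basis `Γ_m` of open subgroups (with compatible
`ℤ_p^d`-coordinates `c_m` sending `1` to `0`, scaled by `p` from one level to the next), then
for all sufficiently large `m`, the `Γ_m`-analytic norm of `w` (the sup of the norms of the
coefficients of any `Γ_m`-analytic expansion of `w`) equals the Banach norm `‖w‖`. -/
theorem statement6 (p d : ℕ) [Fact p.Prime]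
    (G : Type*) [Group G]
    (W : Type*) [NormedAddCommGroup W] [NormedSpace ℚ_[p] W] [CompleteSpace W]
    [DistribMulAction G W] (hiso : ∀ (g : G) (x : W), ‖g • x‖ = ‖x‖)
    (Γ : ℕ → Subgroup G) (hdec : ∀ n, Γ (n + 1) ≤ Γ n)
    (c : ∀ n, Γ n → (Fin d → ℤ_[p])) (hcbij : ∀ n, Function.Bijective (c n))
    (hc1 : ∀ n, c n 1 = 0)
    (hscale : ∀ (n : ℕ) (g : Γ (n + 1)),
      c n ⟨(g : G), hdec n g.2⟩ = fun i => (p : ℤ_[p]) * c (n + 1) g i)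
    (w : W)
    (hw : ∃ n, ∃ a : (Fin d → ℕ) → W, Filter.Tendsto a Filter.cofinite (nhds 0) ∧
      ∀ g : Γ n, (g : G) • w = ∑' k : Fin d → ℕ, ((∏ i, c n g i ^ k i : ℤ_[p]) : ℚ_[p]) • a k) :
    ∃ M : ℕ, ∀ n, M ≤ n → ∀ a : (Fin d → ℕ) → W,
      Filter.Tendsto a Filter.cofinite (nhds 0) →
      (∀ g : Γ n, (g : G) • w =
        ∑' k : Fin d → ℕ, ((∏ i, c n g i ^ k i : ℤ_[p]) : ℚ_[p]) • a k) →
      (⨆ k : Fin d → ℕ, ‖a k‖) = ‖w‖ :=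
  statement6_general p d G W Γ hdec c hcbij hc1 hscale w hw
end

section
/- Let F be a finite extension of Q_p and let (c_n)_{n≥0} be the polynomials in F[a] defined by [a](T) = Σ_{n≥0} c_n(a) T^n, where [a](T) is the multiplication-by-a power series of a Lubin-Tate formal O_F-module. Then each c_n is a polynomial of degree at most n and c_n(O_F) ⊆ O_F. -/
/-!
Comparing the coefficients of `T^n` in `[a](P(T)) = [a](T)^q + π [a](T)`, with
`P = T^q + π T`, gives `(π^n - π) c_n = (c^q)_n - Σ_{k<n} (P^k)_n c_k`, whose right-hand side
only involves `c_k` for `k < n` because `q ≥ 2`. Since `π` is a nonzero non-unit, `π^n ≠ π`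
for `n ≥ 2`, so this recursion determines `c_n` from `c_1 = a`. Running it over `F[a]`, with
the variable in place of `a`, produces the polynomials; their degrees stay bounded by `n`
because the `T^n`-coefficient of a product of series whose `T^k`-coefficients have degree at
most `k` again has degree at most `n`.
-/

/-- Substitution of a polynomial `P` (with zero constant term) into a formal power series,
defined coefficientwise. -/
noncomputable def compPoly {F : Type*} [CommRing F] (f : PowerSeries F) (P : Polynomial F) :
    PowerSeries F :=
  PowerSeries.mk fun n => ∑ k ∈ Finset.range (n + 1),
    PowerSeries.coeff (R := F) k f * Polynomial.coeff (P ^ k) n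

open Finset
open scoped Polynomial PowerSeries

theorem pow_ne_self_of_not_isUnit {M : Type*} [CommMonoidWithZero M] [IsLeftCancelMulZero M]
    {x : M} (hx0 : x ≠ 0) (hx : ¬IsUnit x) {m : ℕ} (hm : 2 ≤ m) : x ^ m ≠ x := by
  intro h
  have : x * x ^ (m - 1) = x * 1 := by rw [← pow_succ', Nat.sub_add_cancel (by omega), h, mul_one]
  exact hx (IsUnit.of_pow_eq_one (mul_left_cancel₀ hx0 this) (by omega))

theorem Polynomial.coeff_pow_self_of_coeff_zero {R : Type*} [CommRing R] {P : R[X]}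
    (hP : P.coeff 0 = 0) (n : ℕ) : (P ^ n).coeff n = P.coeff 1 ^ n := by
  obtain ⟨Q, rfl⟩ := X_dvd_iff.mpr hP
  rw [mul_pow, coeff_X_pow_mul', if_pos le_rfl, Nat.sub_self, coeff_zero_eq_eval_zero,
    eval_pow, ← coeff_zero_eq_eval_zero, ← coeff_X_mul]

namespace PowerSeries

variable {R : Type*} [CommRing R]

theorem coeff_pow_eq_of_coeff_eq {f g : R⟦X⟧} {q n : ℕ} (hq : 2 ≤ q)
    (hf : constantCoeff f = 0) (hg : constantCoeff g = 0)
    (h : ∀ k < n, coeff k f = coeff k g) : coeff n (f ^ q) = coeff n (g ^ q) := by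
  have hsum : X ∣ ∑ i ∈ range q, f ^ i * g ^ (q - 1 - i) := by
    rw [X_dvd_iff, map_sum]
    refine sum_eq_zero fun i hi => ?_
    have := mem_range.mp hi
    rw [map_mul, map_pow, map_pow, hf, hg]
    rcases Nat.eq_zero_or_pos i with rfl | hi0
    · rw [pow_zero, one_mul, zero_pow (by omega)]
    · rw [zero_pow hi0.ne', zero_mul]
  have hsub : X ^ n ∣ f - g := X_pow_dvd_iff.mpr fun k hk => by rw [map_sub, h k hk, sub_self]
  have hdvd : X ^ (n + 1) ∣ f ^ q - g ^ q := by
    rw [← geom_sum₂_mul, pow_succ']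
    exact mul_dvd_mul hsum hsub
  rw [← sub_eq_zero, ← map_sub]
  exact X_pow_dvd_iff.mp hdvd n n.lt_succ_self

theorem natDegree_coeff_mul_le {f g : R[X]⟦X⟧} (hf : ∀ k, (coeff k f).natDegree ≤ k)
    (hg : ∀ k, (coeff k g).natDegree ≤ k) (n : ℕ) : (coeff n (f * g)).natDegree ≤ n := by
  rw [coeff_mul]
  refine Polynomial.natDegree_sum_le_of_forall_le _ _ fun p hp => ?_
  calc (coeff p.1 f * coeff p.2 g).natDegree ≤ p.1 + p.2 :=
        Polynomial.natDegree_mul_le.trans (add_le_add (hf p.1) (hg p.2))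
    _ = n := mem_antidiagonal.mp hp

theorem natDegree_coeff_pow_le {f : R[X]⟦X⟧} (hf : ∀ k, (coeff k f).natDegree ≤ k) (m n : ℕ) :
    (coeff n (f ^ m)).natDegree ≤ n := by
  induction m generalizing n with
  | zero => rw [pow_zero, coeff_one]; split_ifs <;> simp
  | succ m ih => rw [pow_succ]; exact natDegree_coeff_mul_le ih hf n

end PowerSeries

open Polynomial

theorem sub_mul_coeff_of_compPoly_eq {R : Type*} [CommRing R] {f : R⟦X⟧} {P : R[X]} {π : R}
    {q : ℕ} (hP0 : P.coeff 0 = 0) (hP1 : P.coeff 1 = π) (h : compPoly f P = f ^ q + π • f)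
    (n : ℕ) : (π ^ n - π) * PowerSeries.coeff n f =
      PowerSeries.coeff n (f ^ q) - ∑ k ∈ range n, (P ^ k).coeff n * PowerSeries.coeff k f := by
  have hn := congrArg (PowerSeries.coeff n) h
  simp only [compPoly, PowerSeries.coeff_mk, map_add, PowerSeries.coeff_smul, smul_eq_mul,
    sum_range_succ, coeff_pow_self_of_coeff_zero hP0, hP1] at hn
  rw [← sub_eq_zero, ← sub_eq_zero.mpr hn]
  simp only [mul_comm (PowerSeries.coeff _ f)]
  ring

section Recursion

variable {F : Type*} [Field F]

-- `c_n` solved from the `T^n`-coefficient of `f ∘ P = f^q + π f`, with the variable `X` as `c_1`.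
noncomputable def coeffPoly (P : F[X]) (π : F) (q : ℕ) : ℕ → F[X]
  | 0 => 0
  | 1 => X
  | n + 2 => C (π ^ (n + 2) - π)⁻¹ *
      (PowerSeries.coeff (n + 2)
          ((PowerSeries.mk fun k => if _ : k < n + 2 then coeffPoly P π q k else 0) ^ q) -
        ∑ k : Fin (n + 2), C ((P ^ (k : ℕ)).coeff (n + 2)) * coeffPoly P π q k)

theorem natDegree_coeffPoly_le (P : F[X]) (π : F) (q n : ℕ) :
    (coeffPoly P π q n).natDegree ≤ n := by
  induction n using Nat.strong_induction_on with
  | _ n ih =>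
    match n, ih with
    | 0, _ => rw [coeffPoly, natDegree_zero]
    | 1, _ => rw [coeffPoly]; exact natDegree_X_le
    | n + 2, ih =>
      have hG : ∀ k, (PowerSeries.coeff k (PowerSeries.mk fun k =>
          if _ : k < n + 2 then coeffPoly P π q k else 0)).natDegree ≤ k := fun k => by
        rw [PowerSeries.coeff_mk]; split_ifs with hk
        exacts [ih k hk, by simp]
      rw [coeffPoly]
      refine (natDegree_C_mul_le _ _).trans <| (natDegree_sub_le _ _).trans <|
        max_le (PowerSeries.natDegree_coeff_pow_le hG q _) <|
        natDegree_sum_le_of_forall_le _ _ fun k _ => ?_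
      exact (natDegree_C_mul_le _ _).trans ((ih k k.isLt).trans k.isLt.le)

theorem coeff_eq_eval_coeffPoly {P : F[X]} {π : F} {q : ℕ} (hq : 2 ≤ q) (hP0 : P.coeff 0 = 0)
    (hP1 : P.coeff 1 = π) (hπ : ∀ m, 2 ≤ m → π ^ m ≠ π) {f : F⟦X⟧} {a : F}
    (hf0 : PowerSeries.coeff 0 f = 0) (hf1 : PowerSeries.coeff 1 f = a)
    (hf : compPoly f P = f ^ q + π • f) (n : ℕ) :
    PowerSeries.coeff n f = (coeffPoly P π q n).eval a := by
  induction n using Nat.strong_induction_on with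
  | _ n ih =>
    match n, ih with
    | 0, _ => rw [coeffPoly, hf0, eval_zero]
    | 1, _ => rw [coeffPoly, hf1, eval_X]
    | n + 2, ih =>
      have htrunc : PowerSeries.map (evalRingHom a) (PowerSeries.mk fun k =>
          if _ : k < n + 2 then coeffPoly P π q k else 0) = PowerSeries.trunc (n + 2) f := by
        ext k
        rw [PowerSeries.coeff_map, PowerSeries.coeff_mk, Polynomial.coeff_coe,
          PowerSeries.coeff_trunc]
        split_ifs with hk
        exacts [(ih k hk).symm, map_zero _]
      have hpow : (PowerSeries.coeff (n + 2) ((PowerSeries.mk fun k =>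
          if _ : k < n + 2 then coeffPoly P π q k else 0) ^ q)).eval a =
          PowerSeries.coeff (n + 2) (f ^ q) := by
        rw [← coe_evalRingHom, ← PowerSeries.coeff_map, map_pow, htrunc]
        refine PowerSeries.coeff_pow_eq_of_coeff_eq hq ?_ ?_ fun k hk => ?_
        · rw [← PowerSeries.coeff_zero_eq_constantCoeff_apply, Polynomial.coeff_coe,
            PowerSeries.coeff_trunc, if_pos (by omega), hf0]
        · rw [← PowerSeries.coeff_zero_eq_constantCoeff_apply, hf0]
        · rw [Polynomial.coeff_coe, PowerSeries.coeff_trunc, if_pos (by omega)]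
      have hsum : (∑ k : Fin (n + 2), C ((P ^ (k : ℕ)).coeff (n + 2)) * coeffPoly P π q k).eval a =
          ∑ k ∈ range (n + 2), (P ^ k).coeff (n + 2) * PowerSeries.coeff k f := by
        rw [eval_finsetSum, Fin.sum_univ_eq_sum_range (fun k =>
          (C ((P ^ k).coeff (n + 2)) * coeffPoly P π q k).eval a)]
        exact sum_congr rfl fun k hk => by rw [eval_mul, eval_C, ih k (mem_range.mp hk)]
      rw [coeffPoly, eval_mul, eval_C, eval_sub, hpow, hsum,
        ← sub_mul_coeff_of_compPoly_eq hP0 hP1 hf, inv_mul_cancel_left₀]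
      exact sub_ne_zero.mpr (hπ _ (by omega))

end Recursion

theorem statement9_general (q : ℕ) (hq : 2 ≤ q) (F : Type*) [Field F] (O : Subring F)
    (π : F) (hπO : π ∈ O) (hπ0 : π ≠ 0) (hπu : ¬IsUnit (⟨π, hπO⟩ : O))
    (ψ : F → PowerSeries F)
    (hψO : ∀ a ∈ O, ∀ n : ℕ, PowerSeries.coeff (R := F) n (ψ a) ∈ O)
    (hψ0 : ∀ a ∈ O, PowerSeries.coeff (R := F) 0 (ψ a) = 0)
    (hψ1 : ∀ a ∈ O, PowerSeries.coeff (R := F) 1 (ψ a) = a)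
    (hψcomm : ∀ a ∈ O,
      compPoly (ψ a) (Polynomial.X ^ q + Polynomial.C π * Polynomial.X) =
        (ψ a) ^ q + π • ψ a) :
    ∃ c : ℕ → Polynomial F,
      (∀ n, (c n).natDegree ≤ n) ∧
      (∀ n, ∀ a ∈ O, Polynomial.eval a (c n) ∈ O) ∧
      (∀ a ∈ O, ∀ n : ℕ, PowerSeries.coeff (R := F) n (ψ a) = Polynomial.eval a (c n)) := by
  have hπ : ∀ m, 2 ≤ m → π ^ m ≠ π := fun m hm h =>
    pow_ne_self_of_not_isUnit (x := (⟨π, hπO⟩ : O)) (by simpa using hπ0) hπu hm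
      (Subtype.ext (by simpa using h))
  have hP0 : (X ^ q + C π * X : F[X]).coeff 0 = 0 := by simp [coeff_X_pow]; omega
  have hP1 : (X ^ q + C π * X : F[X]).coeff 1 = π := by simp [coeff_X_pow]; omega
  have hcoeff : ∀ a ∈ O, ∀ n, PowerSeries.coeff n (ψ a) = (coeffPoly _ π q n).eval a :=
    fun a ha => coeff_eq_eval_coeffPoly hq hP0 hP1 hπ (hψ0 a ha) (hψ1 a ha) (hψcomm a ha)
  exact ⟨coeffPoly _ π q, natDegree_coeffPoly_le _ π q,
    fun n a ha => hcoeff a ha n ▸ hψO a ha n, hcoeff⟩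

/-- For a Lubin-Tate formal `O_F`-module (with `[π_F](T) = T^q + π_F T`),
writing `[a](T) = Σ_n c_n(a) T^n` for `a ∈ O_F`, the coefficients `c_n` are given by
polynomials over `F` of degree at most `n` mapping `O_F` into `O_F`.  Here `O` is the
valuation ring of `F`, `ψ a = [a](T)` is the multiplication-by-`a` series, normalized by
`[a](T) = aT + O(T²)` and commuting with `[π_F]`. -/
theorem statement9 (q : ℕ) (hq : 2 ≤ q) (F : Type*) [Field F] (O : Subring F)
    (hval : ∀ x : F, x ≠ 0 → x ∈ O ∨ x⁻¹ ∈ O)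
    (π : F) (hπO : π ∈ O) (hπ0 : π ≠ 0) (hπu : ¬IsUnit (⟨π, hπO⟩ : O))
    (ψ : F → PowerSeries F)
    (hψO : ∀ a ∈ O, ∀ n : ℕ, PowerSeries.coeff (R := F) n (ψ a) ∈ O)
    (hψ0 : ∀ a ∈ O, PowerSeries.coeff (R := F) 0 (ψ a) = 0)
    (hψ1 : ∀ a ∈ O, PowerSeries.coeff (R := F) 1 (ψ a) = a)
    (hψcomm : ∀ a ∈ O,
      compPoly (ψ a) (Polynomial.X ^ q + Polynomial.C π * Polynomial.X) =
        (ψ a) ^ q + π • ψ a) :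
    ∃ c : ℕ → Polynomial F,
      (∀ n, (c n).natDegree ≤ n) ∧
      (∀ n, ∀ a ∈ O, Polynomial.eval a (c n) ∈ O) ∧
      (∀ a ∈ O, ∀ n : ℕ, PowerSeries.coeff (R := F) n (ψ a) = Polynomial.eval a (c n)) :=
  statement9_general q hq F O π hπO hπ0 hπu ψ hψO hψ0 hψ1 hψcomm
end

section
/- Let Ẽ^+ = {(x_0, x_1, …) : x_n ∈ O_{C_p}/π_F, x_{n+1}^q = x_n for all n}, with valuation val_E(x) = lim_{n→∞} q^n val_p(x̂_n) where x̂_n ∈ O_{C_p} lifts x_n. Then val_E is a well-defined valuation (independent of the choice of lifts), Ẽ^+ is a perfect ring of characteristic p, complete for val_E, and if ū = (ū_0, ū_1, …) is the element formed from the reductions of the Lubin-Tate torsion points u_n, then val_E(ū) = q/((q−1)e). -/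
/-!
A nonzero class in `O ⧸ (π)` has a well-defined valuation `< v π`: all its lifts have the same
valuation. Along a sequence with `x (n + 1) ^ q = x n` this valuation is multiplied by `q` at
each step, so `q ^ n * v (x̂ n)` is constant once `x n ≠ 0`; this constant is `val_E`. Sums and
products of lifts are lifts, which gives the valuation axioms at any index `n` large enough for
all the valuations involved to stay below `v π`. Moreover `x k = 0` iff `x = 0` or
`val_E x ≥ q ^ k * v π`, so the coordinates of a Cauchy sequence stabilise and define its limit.
The `p`-th root of `(x n)` is `(x (n + 1) ^ (q / p))`. Finally, the Newton polygon of
`X ^ q + π X - u n` gives `v (u (n + 1)) = v π / ((q - 1) q ^ n)`, and `ū` is read off at `n = 2`.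
-/

section TiltValuation

open Filter

variable {K : Type*} [Field K] {v : K → ℝ} {O : Subring K}

/-- Nothing is assumed about `v 0`. -/
structure IsRealValuation (v : K → ℝ) : Prop where
  val_mul : ∀ x y : K, x ≠ 0 → y ≠ 0 → v (x * y) = v x + v y
  min_le_val_add : ∀ x y : K, x ≠ 0 → y ≠ 0 → x + y ≠ 0 → min (v x) (v y) ≤ v (x + y)

structure IsIntegersOf (v : K → ℝ) (O : Subring K) : Prop extends IsRealValuation v where
  mem_iff : ∀ x : K, x ≠ 0 → (x ∈ O ↔ 0 ≤ v x)

namespace IsRealValuation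

theorem val_one (hV : IsRealValuation v) : v 1 = 0 := by
  have h := hV.val_mul 1 1 one_ne_zero one_ne_zero
  rw [mul_one] at h
  linarith

theorem val_neg (hV : IsRealValuation v) {x : K} (hx : x ≠ 0) : v (-x) = v x := by
  have h := hV.val_mul (-1) (-1) (by simp) (by simp)
  rw [neg_mul_neg, mul_one, hV.val_one] at h
  rw [neg_eq_neg_one_mul, hV.val_mul _ _ (by simp) hx]
  linarith

theorem val_pow (hV : IsRealValuation v) {x : K} (hx : x ≠ 0) (k : ℕ) :
    v (x ^ k) = k * v x := by
  induction k with
  | zero => simp [hV.val_one]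
  | succ k ih =>
    rw [pow_succ, hV.val_mul _ _ (pow_ne_zero k hx) hx, ih]
    push_cast
    ring

theorem val_add_of_lt (hV : IsRealValuation v) {x y : K} (hx : x ≠ 0) (hy : y ≠ 0)
    (hxy : v x < v y) : x + y ≠ 0 ∧ v (x + y) = v x := by
  have hsum : x + y ≠ 0 := fun h => by
    rw [add_eq_zero_iff_eq_neg.mp h, hV.val_neg hy] at hxy
    exact hxy.false
  refine ⟨hsum, le_antisymm ?_ ?_⟩
  · have h := hV.min_le_val_add (x + y) (-y) hsum (neg_ne_zero.mpr hy) (by simpa using hx)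
    rw [add_neg_cancel_right, hV.val_neg hy] at h
    by_contra! hlt
    exact absurd (lt_min hlt hxy) (not_lt.mpr h)
  · simpa [min_eq_left hxy.le] using hV.min_le_val_add x y hx hy hsum

end IsRealValuation

section Truncation

/-- The valuation of a chosen lift; on nonzero classes of `O ⧸ (ϖ)` it does not depend on the
choice (`truncVal_mk`). -/
noncomputable def truncVal (v : K → ℝ) {I : Ideal O} (c : O ⧸ I) : ℝ := v (c.out : K)

theorem coe_ne_zero_of_mk_ne_zero {I : Ideal O} {r : O} (hr : Ideal.Quotient.mk I r ≠ 0) :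
    (r : K) ≠ 0 := by
  rintro h
  exact hr (by rw [show r = 0 from Subtype.ext h, map_zero])

theorem coe_out_ne_zero {I : Ideal O} {c : O ⧸ I} (hc : c ≠ 0) : (c.out : K) ≠ 0 :=
  coe_ne_zero_of_mk_ne_zero (by rwa [Ideal.Quotient.mk_out])

variable {ϖ : O}

namespace IsIntegersOf

theorem val_nonneg (hV : IsIntegersOf v O) (r : O) (hr : (r : K) ≠ 0) : 0 ≤ v r :=
  (hV.mem_iff r hr).mp r.2

theorem mk_ne_zero_iff (hV : IsIntegersOf v O) (hϖ : (ϖ : K) ≠ 0) {r : O} (hr : (r : K) ≠ 0) :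
    Ideal.Quotient.mk (Ideal.span {ϖ}) r ≠ 0 ↔ v r < v ϖ := by
  rw [Ne, Ideal.Quotient.eq_zero_iff_mem, Ideal.mem_span_singleton', not_iff_comm, not_lt]
  constructor
  · intro h
    have hq : (r : K) / ϖ ≠ 0 := div_ne_zero hr hϖ
    have hv : v ((r : K) / ϖ) = v r - v ϖ := by
      have := hV.val_mul _ _ hq hϖ
      rw [div_mul_cancel₀ _ hϖ] at this
      linarith
    refine ⟨⟨(r : K) / ϖ, (hV.mem_iff _ hq).mpr (by linarith)⟩, Subtype.ext ?_⟩
    simp [div_mul_cancel₀ _ hϖ]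
  · rintro ⟨a, rfl⟩
    have ha : (a : K) ≠ 0 := fun h => hr (by simp [h])
    rw [Subring.coe_mul, hV.val_mul _ _ ha hϖ]
    linarith [hV.val_nonneg a ha]

theorem truncVal_mk (hV : IsIntegersOf v O) (hϖ : (ϖ : K) ≠ 0) {r : O}
    (hr : Ideal.Quotient.mk (Ideal.span {ϖ}) r ≠ 0) :
    truncVal v (Ideal.Quotient.mk (Ideal.span {ϖ}) r) = v r := by
  have hr0 := coe_ne_zero_of_mk_ne_zero hr
  have hrv := (hV.mk_ne_zero_iff hϖ hr0).mp hr
  set s := (Ideal.Quotient.mk (Ideal.span {ϖ}) r).out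
  have hsr : Ideal.Quotient.mk (Ideal.span {ϖ}) (s - r) = 0 := by
    rw [map_sub, Ideal.Quotient.mk_out, sub_self]
  show v s = v r
  by_cases hd : ((s - r : O) : K) = 0
  · rw [AddSubgroupClass.coe_sub, sub_eq_zero] at hd
    rw [hd]
  · have hdv : v ϖ ≤ v ((s - r : O) : K) := not_lt.mp fun h => (hV.mk_ne_zero_iff hϖ hd).mpr h hsr
    have := (hV.val_add_of_lt hr0 hd (hrv.trans_le hdv)).2
    rwa [AddSubgroupClass.coe_sub, add_sub_cancel] at this

variable {c d : O ⧸ Ideal.span {ϖ}}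

theorem truncVal_lt (hV : IsIntegersOf v O) (hϖ : (ϖ : K) ≠ 0) (hc : c ≠ 0) :
    truncVal v c < v ϖ :=
  (hV.mk_ne_zero_iff hϖ (coe_out_ne_zero hc)).mp (by rwa [Ideal.Quotient.mk_out])

theorem truncVal_nonneg (hV : IsIntegersOf v O) (hc : c ≠ 0) : 0 ≤ truncVal v c :=
  hV.val_nonneg _ (coe_out_ne_zero hc)

theorem pow_ne_zero_iff_truncVal (hV : IsIntegersOf v O) (hϖ : (ϖ : K) ≠ 0) (hc : c ≠ 0)
    (k : ℕ) : c ^ k ≠ 0 ↔ k * truncVal v c < v ϖ := by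
  have hr := coe_out_ne_zero hc
  change _ ↔ _ * v (c.out : K) < _
  rw [← hV.val_pow hr, ← Subring.coe_pow, ← hV.mk_ne_zero_iff hϖ (by simpa using pow_ne_zero k hr),
    map_pow, Ideal.Quotient.mk_out]

theorem truncVal_pow (hV : IsIntegersOf v O) (hϖ : (ϖ : K) ≠ 0) (hc : c ≠ 0) {k : ℕ}
    (hck : c ^ k ≠ 0) : truncVal v (c ^ k) = k * truncVal v c := by
  have hmk : c ^ k = Ideal.Quotient.mk (Ideal.span {ϖ}) (c.out ^ k) := by
    rw [map_pow, Ideal.Quotient.mk_out]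
  rw [hmk] at hck ⊢
  rw [hV.truncVal_mk hϖ hck, Subring.coe_pow, hV.val_pow (coe_out_ne_zero hc)]
  rfl

theorem truncVal_mul (hV : IsIntegersOf v O) (hϖ : (ϖ : K) ≠ 0) (hc : c ≠ 0) (hd : d ≠ 0)
    (hlt : truncVal v c + truncVal v d < v ϖ) :
    c * d ≠ 0 ∧ truncVal v (c * d) = truncVal v c + truncVal v d := by
  have hr := coe_out_ne_zero hc
  have hs := coe_out_ne_zero hd
  have hcd : c * d = Ideal.Quotient.mk (Ideal.span {ϖ}) (c.out * d.out) := by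
    rw [map_mul, Ideal.Quotient.mk_out, Ideal.Quotient.mk_out]
  have hv : v ((c.out * d.out : O) : K) = truncVal v c + truncVal v d := by
    rw [Subring.coe_mul, hV.val_mul _ _ hr hs]
    rfl
  have hne : c * d ≠ 0 := by
    rw [hcd, hV.mk_ne_zero_iff hϖ (by simpa using mul_ne_zero hr hs), hv]
    exact hlt
  refine ⟨hne, ?_⟩
  rw [hcd] at hne ⊢
  rw [hV.truncVal_mk hϖ hne, hv]

theorem min_truncVal_le_add (hV : IsIntegersOf v O) (hϖ : (ϖ : K) ≠ 0) (hc : c ≠ 0)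
    (hd : d ≠ 0) (hcd : c + d ≠ 0) :
    min (truncVal v c) (truncVal v d) ≤ truncVal v (c + d) := by
  have hmk : c + d = Ideal.Quotient.mk (Ideal.span {ϖ}) (c.out + d.out) := by
    rw [map_add, Ideal.Quotient.mk_out, Ideal.Quotient.mk_out]
  rw [hmk] at hcd ⊢
  rw [hV.truncVal_mk hϖ hcd]
  have := coe_ne_zero_of_mk_ne_zero hcd
  rw [Subring.coe_add] at this ⊢
  exact hV.min_le_val_add _ _ (coe_out_ne_zero hc) (coe_out_ne_zero hd) this

theorem charP_quotient (hV : IsIntegersOf v O) (hϖ : (ϖ : K) ≠ 0)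
    (hϖv : 0 < v ϖ) {p : ℕ} (hp : p.Prime) (hpv : v ϖ ≤ v p) :
    CharP (O ⧸ Ideal.span {ϖ}) p := by
  have : Nontrivial (O ⧸ Ideal.span {ϖ}) := ⟨0, 1, fun h => by
    have h1 := (hV.mk_ne_zero_iff hϖ (r := 1) (by simp)).mpr (by simpa [hV.val_one] using hϖv)
    exact h1 (by rw [map_one, h])⟩
  rw [CharP.charP_iff_prime_eq_zero hp, ← map_natCast (Ideal.Quotient.mk (Ideal.span {ϖ}))]
  by_contra hne
  have hlt := (hV.mk_ne_zero_iff hϖ (coe_ne_zero_of_mk_ne_zero hne)).mp hne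
  simp only [SubringClass.coe_natCast] at hlt
  linarith

end IsIntegersOf

end Truncation

theorem exists_lt_pow_mul {q : ℕ} (hq : 1 < q) {c : ℝ} (hc : 0 < c) (C : ℝ) :
    ∃ k : ℕ, C < q ^ k * c := by
  obtain ⟨k, hk⟩ := pow_unbounded_of_one_lt (C / c) (by exact_mod_cast hq : (1 : ℝ) < q)
  exact ⟨k, (div_lt_iff₀ hc).mp hk⟩

section PowCompatible

variable {M : Type*} {q : ℕ} {y : ℕ → M}

def IsPowCompatible [Monoid M] (q : ℕ) (y : ℕ → M) : Prop := ∀ n, y (n + 1) ^ q = y n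

theorem IsPowCompatible.mul [CommMonoid M] {z : ℕ → M} (hy : IsPowCompatible q y)
    (hz : IsPowCompatible q z) : IsPowCompatible q (y * z) := fun n => by
  simp only [Pi.mul_apply, mul_pow, hy n, hz n]

theorem IsPowCompatible.ne_zero_of_le [MonoidWithZero M] (hy : IsPowCompatible q y) (hq : q ≠ 0)
    {n m : ℕ} (hn : y n ≠ 0) (hnm : n ≤ m) : y m ≠ 0 := by
  induction m, hnm using Nat.le_induction with
  | base => exact hn
  | succ m _ ih => exact fun h => ih (by rw [← hy m, h, zero_pow hq])

theorem IsPowCompatible.eventually_ne_zero [MonoidWithZero M] (hy : IsPowCompatible q y)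
    (hq : q ≠ 0) (hy0 : y ≠ 0) : ∀ᶠ n in atTop, y n ≠ 0 := by
  obtain ⟨n, hn⟩ := Function.ne_iff.mp hy0
  exact eventually_atTop.mpr ⟨n, fun m => hy.ne_zero_of_le hq hn⟩

end PowCompatible

section SeqVal

/-- The paper's `val_E`, computed at the first nonzero coordinate; by `seqVal_eq` any nonzero
coordinate gives the same value. -/
noncomputable def seqVal (q : ℕ) (v : K → ℝ) {I : Ideal O} (y : ℕ → O ⧸ I) : ℝ :=
  open Classical in
  if h : ∃ n, y n ≠ 0 then (q : ℝ) ^ Nat.find h * truncVal v (y (Nat.find h)) else 0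

variable {ϖ : O} {q : ℕ} {y : ℕ → O ⧸ Ideal.span {ϖ}}

namespace IsIntegersOf

theorem truncVal_succ (hV : IsIntegersOf v O) (hϖ : (ϖ : K) ≠ 0) (hq : q ≠ 0)
    (hy : IsPowCompatible q y) {n : ℕ} (hn : y n ≠ 0) :
    q * truncVal v (y (n + 1)) = truncVal v (y n) := by
  have h := hV.truncVal_pow hϖ (hy.ne_zero_of_le hq hn n.le_succ) (k := q) (by rwa [hy n])
  rwa [hy n, eq_comm] at h

theorem pow_mul_truncVal_eq (hV : IsIntegersOf v O) (hϖ : (ϖ : K) ≠ 0) (hq : q ≠ 0)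
    (hy : IsPowCompatible q y) {n m : ℕ} (hn : y n ≠ 0) (hnm : n ≤ m) :
    (q : ℝ) ^ m * truncVal v (y m) = q ^ n * truncVal v (y n) := by
  induction m, hnm using Nat.le_induction with
  | base => rfl
  | succ m hnm ih =>
    rw [pow_succ, mul_assoc, hV.truncVal_succ hϖ hq hy (hy.ne_zero_of_le hq hn hnm), ih]

theorem seqVal_eq (hV : IsIntegersOf v O) (hϖ : (ϖ : K) ≠ 0) (hq : q ≠ 0)
    (hy : IsPowCompatible q y) {n : ℕ} (hn : y n ≠ 0) :
    seqVal q v y = q ^ n * truncVal v (y n) := by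
  classical
  have h : ∃ n, y n ≠ 0 := ⟨n, hn⟩
  rw [seqVal, dif_pos h]
  exact (hV.pow_mul_truncVal_eq hϖ hq hy (Nat.find_spec h) (Nat.find_min' h hn)).symm

theorem seqVal_nonneg (hV : IsIntegersOf v O) (hϖ : (ϖ : K) ≠ 0) (hq : q ≠ 0)
    (hy : IsPowCompatible q y) : 0 ≤ seqVal q v y := by
  by_cases h : ∃ n, y n ≠ 0
  · obtain ⟨n, hn⟩ := h
    rw [hV.seqVal_eq hϖ hq hy hn]
    exact mul_nonneg (by positivity) (hV.truncVal_nonneg hn)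
  · simp [seqVal, h]

theorem seqVal_lt (hV : IsIntegersOf v O) (hϖ : (ϖ : K) ≠ 0) (hq : q ≠ 0)
    (hy : IsPowCompatible q y) {n : ℕ} (hn : y n ≠ 0) : seqVal q v y < q ^ n * v ϖ := by
  rw [hV.seqVal_eq hϖ hq hy hn]
  exact mul_lt_mul_of_pos_left (hV.truncVal_lt hϖ hn) (by positivity)

theorem pow_mul_le_seqVal (hV : IsIntegersOf v O) (hϖ : (ϖ : K) ≠ 0) (hq : 1 ≤ q)
    (hy : IsPowCompatible q y) {k n : ℕ} (hk : y k = 0) (hn : y n ≠ 0) :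
    (q : ℝ) ^ k * v ϖ ≤ seqVal q v y := by
  have hq0 : q ≠ 0 := by omega
  have hϖ0 : 0 ≤ v ϖ := hV.val_nonneg ϖ hϖ
  have key : ∀ j, k ≤ j → y j ≠ 0 → (q : ℝ) ^ k * v ϖ ≤ q ^ j * truncVal v (y j) := by
    intro j hkj
    induction j, hkj using Nat.le_induction with
    | base => exact fun h => absurd hk h
    | succ j hkj ih =>
      intro hj
      by_cases hyj : y j = 0
      · have hle : v ϖ ≤ q * truncVal v (y (j + 1)) := by
          have := (hV.pow_ne_zero_iff_truncVal hϖ hj q).not.mp (by rwa [hy j, not_not])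
          exact not_lt.mp this
        calc (q : ℝ) ^ k * v ϖ ≤ q ^ j * v ϖ := by gcongr; exact_mod_cast hq
          _ ≤ q ^ j * (q * truncVal v (y (j + 1))) := by gcongr
          _ = q ^ (j + 1) * truncVal v (y (j + 1)) := by ring
      · rw [hV.pow_mul_truncVal_eq hϖ hq0 hy hyj j.le_succ]
        exact ih hyj
  rw [hV.seqVal_eq hϖ hq0 hy hn]
  refine key n ?_ hn
  by_contra! hnk
  exact hy.ne_zero_of_le hq0 hn hnk.le hk

theorem apply_ne_zero_iff_seqVal_lt (hV : IsIntegersOf v O) (hϖ : (ϖ : K) ≠ 0) (hq : 1 ≤ q)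
    (hy : IsPowCompatible q y) (hy0 : y ≠ 0) (k : ℕ) :
    y k ≠ 0 ↔ seqVal q v y < q ^ k * v ϖ := by
  obtain ⟨n, hn⟩ := Function.ne_iff.mp hy0
  refine ⟨hV.seqVal_lt hϖ (by omega) hy, fun hlt hk => ?_⟩
  exact (hV.pow_mul_le_seqVal hϖ hq hy hk hn).not_gt hlt

variable {a b : ℕ → O ⧸ Ideal.span {ϖ}}

theorem seqVal_mul (hV : IsIntegersOf v O) (hϖ : (ϖ : K) ≠ 0) (hq : 1 < q)
    (ha : IsPowCompatible q a) (hb : IsPowCompatible q b) (ha0 : a ≠ 0) (hb0 : b ≠ 0) :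
    a * b ≠ 0 ∧ seqVal q v (a * b) = seqVal q v a + seqVal q v b := by
  have hq0 : q ≠ 0 := by omega
  have hϖpos : 0 < v ϖ := by
    obtain ⟨n, hn⟩ := Function.ne_iff.mp ha0
    exact (hV.truncVal_nonneg hn).trans_lt (hV.truncVal_lt hϖ hn)
  obtain ⟨n, hn⟩ := exists_lt_pow_mul hq hϖpos (seqVal q v a + seqVal q v b)
  have han : a n ≠ 0 := (hV.apply_ne_zero_iff_seqVal_lt hϖ hq.le ha ha0 n).mpr
    (by linarith [hV.seqVal_nonneg hϖ hq0 hb])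
  have hbn : b n ≠ 0 := (hV.apply_ne_zero_iff_seqVal_lt hϖ hq.le hb hb0 n).mpr
    (by linarith [hV.seqVal_nonneg hϖ hq0 ha])
  have hsum : (q : ℝ) ^ n * (truncVal v (a n) + truncVal v (b n)) =
      seqVal q v a + seqVal q v b := by
    rw [mul_add, hV.seqVal_eq hϖ hq0 ha han, hV.seqVal_eq hϖ hq0 hb hbn]
  obtain ⟨habn, hval⟩ := hV.truncVal_mul hϖ han hbn
    (lt_of_mul_lt_mul_left (hsum.trans_lt hn) (by positivity))
  have habn' : (a * b) n ≠ 0 := habn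
  refine ⟨fun h => habn' (by rw [h, Pi.zero_apply]), ?_⟩
  rw [hV.seqVal_eq hϖ hq0 (ha.mul hb) habn', Pi.mul_apply, hval, hsum]

theorem min_seqVal_le_add (hV : IsIntegersOf v O) (hϖ : (ϖ : K) ≠ 0) (hq : q ≠ 0)
    (ha : IsPowCompatible q a) (hb : IsPowCompatible q b) (hab : IsPowCompatible q (a + b))
    (ha0 : a ≠ 0) (hb0 : b ≠ 0) (hab0 : a + b ≠ 0) :
    min (seqVal q v a) (seqVal q v b) ≤ seqVal q v (a + b) := by
  obtain ⟨n, han, hbn, habn⟩ := ((ha.eventually_ne_zero hq ha0).and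
    ((hb.eventually_ne_zero hq hb0).and (hab.eventually_ne_zero hq hab0))).exists
  rw [hV.seqVal_eq hϖ hq ha han, hV.seqVal_eq hϖ hq hb hbn, hV.seqVal_eq hϖ hq hab habn,
    ← mul_min_of_nonneg _ _ (by positivity)]
  exact mul_le_mul_of_nonneg_left (hV.min_truncVal_le_add hϖ han hbn habn) (by positivity)

end IsIntegersOf

end SeqVal

namespace IsRealValuation

variable {π : K} {q : ℕ}

/-- Newton polygon of `X ^ q + π X - y`: when `v y` is small, the root `z` has valuation
`v y / q`. -/
theorem val_of_pow_add_mul (hV : IsRealValuation v) (hπ : π ≠ 0) (hπv : 0 < v π) (hq : 1 < q)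
    {z : K} (hz : z ≠ 0) (hy : z ^ q + π * z ≠ 0) (hle : (q - 1) * v (z ^ q + π * z) ≤ v π) :
    q * v z = v (z ^ q + π * z) := by
  have hq' : (1 : ℝ) < q := by exact_mod_cast hq
  have hzq := hV.val_pow hz q
  have hπz := hV.val_mul _ _ hπ hz
  have hlt : v (z ^ q) < v (π * z) := by
    by_contra! hge
    have hmin := hV.min_le_val_add _ _ (pow_ne_zero q hz) (mul_ne_zero hπ hz) hy
    rw [min_eq_right hge] at hmin
    nlinarith
  rw [(hV.val_add_of_lt (pow_ne_zero q hz) (mul_ne_zero hπ hz) hlt).2, hzq]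

theorem val_lubinTate (hV : IsRealValuation v) (hπ : π ≠ 0) (hπv : 0 < v π) (hq : 1 < q)
    {u : ℕ → K} (hu0 : u 0 = 0) (hu1 : u 1 ≠ 0) (hu : ∀ n, u (n + 1) ^ q + π * u (n + 1) = u n)
    (n : ℕ) : u (n + 1) ≠ 0 ∧ v (u (n + 1)) = v π / ((q - 1) * q ^ n) := by
  have hq' : (1 : ℝ) < q := by exact_mod_cast hq
  induction n with
  | zero =>
    have h := hu 0
    rw [hu0, add_eq_zero_iff_eq_neg] at h
    have hv := hV.val_pow hu1 q
    rw [h, hV.val_neg (mul_ne_zero hπ hu1), hV.val_mul _ _ hπ hu1] at hv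
    refine ⟨hu1, ?_⟩
    rw [pow_zero, mul_one, eq_div_iff (by linarith)]
    linarith
  | succ n ih =>
    obtain ⟨hun, hvn⟩ := ih
    have hz : u (n + 2) ≠ 0 := fun h => hun (by rw [← hu (n + 1), h, zero_pow (by omega)]; simp)
    have hstep := hV.val_of_pow_add_mul hπ hπv hq hz (by rwa [hu (n + 1)]) (by
      rw [hu (n + 1), hvn, mul_div_assoc', div_le_iff₀ (by positivity)]
      have := one_le_pow₀ (n := n) hq'.le
      nlinarith [mul_nonneg (mul_nonneg hπv.le (sub_nonneg.mpr hq'.le)) (sub_nonneg.mpr this)])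
    rw [hu (n + 1), hvn] at hstep
    refine ⟨hz, ?_⟩
    field_simp at hstep ⊢
    linear_combination hstep

end IsRealValuation

section Tilt

variable {E R : Type*} [CommRing E] [CommRing R] {q : ℕ} {Φ : E →+* (ℕ → R)}

/-- `Φ` of the `k`-th root of `x` is `n ↦ Φ x (n + 1) ^ (q / k)`. -/
theorem existsUnique_pow_eq_of_dvd (hΦinj : Function.Injective Φ)
    (hΦcomp : ∀ x, IsPowCompatible q (Φ x))
    (hΦsurj : ∀ y, IsPowCompatible q y → ∃ x, Φ x = y) {k : ℕ} (hk : k ∣ q) (x : E) :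
    ∃! y : E, y ^ k = x := by
  obtain ⟨m, rfl⟩ := hk
  have hroot : ∀ y : E, y ^ k = x → Φ y = fun n => Φ x (n + 1) ^ m := fun y hy => funext fun n => by
    rw [← hΦcomp y n, pow_mul, ← hy, map_pow]
    rfl
  obtain ⟨y, hy⟩ := hΦsurj (fun n => Φ x (n + 1) ^ m) fun n => by
    simp only
    rw [← pow_mul, mul_comm, pow_mul, hΦcomp x]
  refine ⟨y, hΦinj (funext fun n => ?_), fun z hz => hΦinj ((hroot z hz).trans hy.symm)⟩
  rw [map_pow, Pi.pow_apply, hy, ← pow_mul, mul_comm, hΦcomp x]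

end Tilt

namespace IsIntegersOf

variable {ϖ : O} {q : ℕ}

theorem tendsto_pow_mul_val_lift (hV : IsIntegersOf v O) (hϖ : (ϖ : K) ≠ 0) (hq : q ≠ 0)
    {y : ℕ → O ⧸ Ideal.span {ϖ}} (hy : IsPowCompatible q y) (hy0 : y ≠ 0) {lift : ℕ → O}
    (hlift : ∀ n, Ideal.Quotient.mk (Ideal.span {ϖ}) (lift n) = y n) :
    (∀ᶠ n in atTop, (lift n : K) ≠ 0) ∧
      Tendsto (fun n => (q : ℝ) ^ n * v (lift n)) atTop (nhds (seqVal q v y)) := by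
  have hev := hy.eventually_ne_zero hq hy0
  refine ⟨hev.mono fun n hn => coe_ne_zero_of_mk_ne_zero (by rwa [hlift]),
    tendsto_const_nhds.congr' ?_⟩
  filter_upwards [hev] with n hn
  rw [hV.seqVal_eq hϖ hq hy hn, ← hlift n, hV.truncVal_mk hϖ (by rwa [hlift])]

theorem seqVal_lubinTate (hV : IsIntegersOf v O) (hϖ : (ϖ : K) ≠ 0) (hϖv : 0 < v ϖ)
    (hq : 1 < q) {u : ℕ → K} (huO : ∀ n, u n ∈ O) (hu0 : u 0 = 0) (hu1 : u 1 ≠ 0)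
    (hu : ∀ n, u (n + 1) ^ q + ϖ * u (n + 1) = u n) {y : ℕ → O ⧸ Ideal.span {ϖ}}
    (hy : IsPowCompatible q y) (hyu : ∀ n, y n = Ideal.Quotient.mk _ ⟨u n, huO n⟩) :
    seqVal q v y = q * v ϖ / (q - 1) := by
  have hq' : (2 : ℝ) ≤ q := by exact_mod_cast (hq : 2 ≤ q)
  obtain ⟨hu2, hvu2⟩ := hV.val_lubinTate hϖ hϖv hq hu0 hu1 hu 1
  -- `y 1` vanishes when `q = 2`, so `y 2` is the first coordinate that sees `ū`.
  have hy2 : y 2 ≠ 0 := by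
    rw [hyu, hV.mk_ne_zero_iff hϖ hu2, hvu2, pow_one]
    exact div_lt_self hϖv (by nlinarith)
  rw [hV.seqVal_eq hϖ (by omega) hy hy2, hyu, hV.truncVal_mk hϖ (hyu 2 ▸ hy2)]
  change _ * v (u 2) = _
  rw [hvu2]
  field_simp

section Tilt

variable {E : Type*} [CommRing E] {Φ : E →+* (ℕ → O ⧸ Ideal.span {ϖ})}

theorem map_apply_eq_zero_iff (hV : IsIntegersOf v O) (hϖ : (ϖ : K) ≠ 0) (hq : 1 ≤ q)
    (hΦinj : Function.Injective Φ) (hΦcomp : ∀ x, IsPowCompatible q (Φ x)) (x : E) (k : ℕ) :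
    Φ x k = 0 ↔ x = 0 ∨ (x ≠ 0 ∧ (q : ℝ) ^ k * v ϖ ≤ seqVal q v (Φ x)) := by
  by_cases hx : x = 0
  · simp [hx]
  · rw [← not_iff_not, ← Ne, hV.apply_ne_zero_iff_seqVal_lt hϖ hq (hΦcomp x)
      ((map_ne_zero_iff Φ hΦinj).mpr hx)]
    simp [hx]

theorem exists_limit_of_cauchy (hV : IsIntegersOf v O) (hϖ : (ϖ : K) ≠ 0) (hϖv : 0 < v ϖ)
    (hq : 1 < q) (hΦinj : Function.Injective Φ) (hΦcomp : ∀ x, IsPowCompatible q (Φ x))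
    (hΦsurj : ∀ y, IsPowCompatible q y → ∃ x, Φ x = y) (f : ℕ → E)
    (hf : ∀ C : ℝ, ∃ N, ∀ m n, N ≤ m → N ≤ n →
      f m = f n ∨ (f m - f n ≠ 0 ∧ C ≤ seqVal q v (Φ (f m - f n)))) :
    ∃ L : E, ∀ C : ℝ, ∃ N, ∀ n, N ≤ n →
      f n = L ∨ (f n - L ≠ 0 ∧ C ≤ seqVal q v (Φ (f n - L))) := by
  have hzero := hV.map_apply_eq_zero_iff hϖ hq.le hΦinj hΦcomp
  have hstab : ∀ k, ∃ N, ∀ m, N ≤ m → Φ (f m) k = Φ (f N) k := fun k => by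
    obtain ⟨N, hN⟩ := hf (q ^ k * v ϖ)
    refine ⟨N, fun m hm => ?_⟩
    have := (hzero (f m - f N) k).mpr ((hN m N hm le_rfl).imp sub_eq_zero.mpr id)
    rwa [map_sub, Pi.sub_apply, sub_eq_zero] at this
  choose N hN using hstab
  obtain ⟨L, hL⟩ := hΦsurj (fun k => Φ (f (N k)) k) fun k => by
    change Φ (f (N (k + 1))) (k + 1) ^ q = Φ (f (N k)) k
    rw [← hN (k + 1) _ (le_max_right (N k) _), hΦcomp, hN k _ (le_max_left _ _)]
  refine ⟨L, fun C => ?_⟩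
  obtain ⟨k, hk⟩ := exists_lt_pow_mul hq hϖv C
  refine ⟨N k, fun n hn => ?_⟩
  have hk0 : Φ (f n - L) k = 0 := by
    rw [map_sub, Pi.sub_apply, hL, hN k n hn, sub_self]
  rcases (hzero _ k).mp hk0 with h | ⟨hne, hle⟩
  · exact Or.inl (sub_eq_zero.mp h)
  · exact Or.inr ⟨hne, hk.le.trans hle⟩

end Tilt

end IsIntegersOf

end TiltValuation

theorem statement10_general (p q e h : ℕ) [hp : Fact p.Prime] (hq : q = p ^ h) (hh : 1 ≤ h)
    (he : 1 ≤ e)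
    (K : Type*) [Field K] (v : K → ℝ)
    (hvmul : ∀ x y : K, x ≠ 0 → y ≠ 0 → v (x * y) = v x + v y)
    (hvadd : ∀ x y : K, x ≠ 0 → y ≠ 0 → x + y ≠ 0 → min (v x) (v y) ≤ v (x + y))
    (hvp : v (p : K) = 1)
    (O : Subring K) (hO : ∀ x : K, x ≠ 0 → (x ∈ O ↔ 0 ≤ v x))
    (π : K) (hπO : π ∈ O) (hπv : v π = 1 / (e : ℝ))
    (E : Type*) [CommRing E]
    (Φ : E →+* (ℕ → O ⧸ Ideal.span {(⟨π, hπO⟩ : O)}))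
    (hΦinj : Function.Injective Φ)
    (hΦcomp : ∀ (x : E) (n : ℕ), Φ x (n + 1) ^ q = Φ x n)
    (hΦsurj : ∀ y : ℕ → O ⧸ Ideal.span {(⟨π, hπO⟩ : O)},
      (∀ n, y (n + 1) ^ q = y n) → ∃ x, Φ x = y)
    (u : ℕ → K) (hu0 : u 0 = 0) (hu1 : u 1 ≠ 0) (huO : ∀ n, u n ∈ O)
    (hurec : ∀ n, u (n + 1) ^ q + π * u (n + 1) = u n)
    (ubar : E) (hubar : ∀ n, Φ ubar n = Ideal.Quotient.mk _ (⟨u n, huO n⟩ : O)) :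
    CharP E p ∧
    (∀ x : E, ∃! y : E, y ^ p = x) ∧
    ∃ valE : E → ℝ,
      (∀ x : E, x ≠ 0 → ∀ lift : ℕ → O,
        (∀ n, Ideal.Quotient.mk (Ideal.span {(⟨π, hπO⟩ : O)}) (lift n) = Φ x n) →
          (∀ᶠ n in Filter.atTop, (lift n : K) ≠ 0) ∧
          Filter.Tendsto (fun n => (q : ℝ) ^ n * v ((lift n : K))) Filter.atTop
            (nhds (valE x))) ∧
      (∀ x y : E, x ≠ 0 → y ≠ 0 → valE (x * y) = valE x + valE y) ∧
      (∀ x y : E, x ≠ 0 → y ≠ 0 → x + y ≠ 0 → min (valE x) (valE y) ≤ valE (x + y)) ∧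
      (∀ f : ℕ → E,
        (∀ C : ℝ, ∃ N, ∀ m n, N ≤ m → N ≤ n →
          f m = f n ∨ (f m - f n ≠ 0 ∧ C ≤ valE (f m - f n))) →
        ∃ L : E, ∀ C : ℝ, ∃ N, ∀ n, N ≤ n → f n = L ∨ (f n - L ≠ 0 ∧ C ≤ valE (f n - L))) ∧
      valE ubar = (q : ℝ) / (((q : ℝ) - 1) * (e : ℝ)) := by
  have hq1 : 1 < q := hq ▸ Nat.one_lt_pow (by omega) hp.out.one_lt
  have hπ : π ≠ 0 := by
    rintro rfl
    have h0 := hurec 0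
    rw [hu0, zero_mul, add_zero] at h0
    exact hu1 ((pow_eq_zero_iff (by omega)).mp h0)
  have hπv0 : 0 < v π := by rw [hπv]; positivity
  have hV : IsIntegersOf v O := ⟨⟨hvmul, hvadd⟩, hO⟩
  have hcomp : ∀ x, IsPowCompatible q (Φ x) := hΦcomp
  have hΦne : ∀ x : E, x ≠ 0 → Φ x ≠ 0 := fun x => (map_ne_zero_iff Φ hΦinj).mpr
  have := hV.charP_quotient (ϖ := ⟨π, hπO⟩) hπ hπv0 hp.out
    (by rw [hvp, hπv]; exact div_le_one_of_le₀ (by exact_mod_cast he) (by positivity))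
  have := CharP.pi ℕ (O ⧸ Ideal.span {(⟨π, hπO⟩ : O)}) p
  refine ⟨Φ.charP hΦinj p,
    existsUnique_pow_eq_of_dvd hΦinj hcomp hΦsurj (hq ▸ dvd_pow_self p (by omega)),
    fun x => seqVal q v (Φ x),
    fun x hx lift hlift => hV.tendsto_pow_mul_val_lift hπ (by omega) (hcomp x) (hΦne x hx) hlift,
    fun x y hx hy => ?_, fun x y hx hy hxy => ?_,
    hV.exists_limit_of_cauchy hπ hπv0 hq1 hΦinj hcomp hΦsurj, ?_⟩
  · dsimp only
    rw [map_mul]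
    exact (hV.seqVal_mul hπ hq1 (hcomp x) (hcomp y) (hΦne x hx) (hΦne y hy)).2
  · have := hV.min_seqVal_le_add hπ (by omega) (hcomp x) (hcomp y) (map_add Φ x y ▸ hcomp _)
      (hΦne x hx) (hΦne y hy) (map_add Φ x y ▸ hΦne _ hxy)
    rwa [← map_add] at this
  · dsimp only
    rw [hV.seqVal_lubinTate hπ hπv0 hq1 huO hu0 hu1 hurec (hcomp ubar) hubar, hπv]
    field_simp

/-- The tilt `Ẽ⁺ = lim_{x↦x^q} O_{C_p}/π_F` (presented here by an
isomorphism `Φ` of `E` onto the ring of `q`-power-compatible sequences) carries a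
well-defined valuation `val_E(x) = lim_n q^n val_p(x̂_n)` (independent of the choice of
lifts), is a perfect ring of characteristic `p`, is complete for `val_E`, and the element
`ū` formed from the reductions of the Lubin-Tate torsion points `u_n` satisfies
`val_E(ū) = q/((q−1)e)`. -/
theorem statement10 (p q e h : ℕ) [hp : Fact p.Prime] (hq : q = p ^ h) (hh : 1 ≤ h)
    (he : 1 ≤ e)
    (K : Type*) [Field K] (v : K → ℝ)
    (hvmul : ∀ x y : K, x ≠ 0 → y ≠ 0 → v (x * y) = v x + v y)
    (hvadd : ∀ x y : K, x ≠ 0 → y ≠ 0 → x + y ≠ 0 → min (v x) (v y) ≤ v (x + y))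
    (hvp : v (p : K) = 1)
    (hAC : IsAlgClosed K)
    (O : Subring K) (hO : ∀ x : K, x ≠ 0 → (x ∈ O ↔ 0 ≤ v x))
    (π : K) (hπO : π ∈ O) (hπv : v π = 1 / (e : ℝ))
    (E : Type*) [CommRing E]
    (Φ : E →+* (ℕ → O ⧸ Ideal.span {(⟨π, hπO⟩ : O)}))
    (hΦinj : Function.Injective Φ)
    (hΦcomp : ∀ (x : E) (n : ℕ), Φ x (n + 1) ^ q = Φ x n)
    (hΦsurj : ∀ y : ℕ → O ⧸ Ideal.span {(⟨π, hπO⟩ : O)},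
      (∀ n, y (n + 1) ^ q = y n) → ∃ x, Φ x = y)
    (u : ℕ → K) (hu0 : u 0 = 0) (hu1 : u 1 ≠ 0) (huO : ∀ n, u n ∈ O)
    (hurec : ∀ n, u (n + 1) ^ q + π * u (n + 1) = u n)
    (ubar : E) (hubar : ∀ n, Φ ubar n = Ideal.Quotient.mk _ (⟨u n, huO n⟩ : O)) :
    CharP E p ∧
    (∀ x : E, ∃! y : E, y ^ p = x) ∧
    ∃ valE : E → ℝ,
      (∀ x : E, x ≠ 0 → ∀ lift : ℕ → O,
        (∀ n, Ideal.Quotient.mk (Ideal.span {(⟨π, hπO⟩ : O)}) (lift n) = Φ x n) →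
          (∀ᶠ n in Filter.atTop, (lift n : K) ≠ 0) ∧
          Filter.Tendsto (fun n => (q : ℝ) ^ n * v ((lift n : K))) Filter.atTop
            (nhds (valE x))) ∧
      (∀ x y : E, x ≠ 0 → y ≠ 0 → valE (x * y) = valE x + valE y) ∧
      (∀ x y : E, x ≠ 0 → y ≠ 0 → x + y ≠ 0 → min (valE x) (valE y) ≤ valE (x + y)) ∧
      (∀ f : ℕ → E,
        (∀ C : ℝ, ∃ N, ∀ m n, N ≤ m → N ≤ n →
          f m = f n ∨ (f m - f n ≠ 0 ∧ C ≤ valE (f m - f n))) →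
        ∃ L : E, ∀ C : ℝ, ∃ N, ∀ n, N ≤ n → f n = L ∨ (f n - L ≠ 0 ∧ C ≤ valE (f n - L))) ∧
      valE ubar = (q : ℝ) / (((q : ℝ) - 1) * (e : ℝ)) :=
  statement10_general p q e h (hp := hp) hq hh he K v hvmul hvadd hvp O hO π hπO hπv E Φ hΦinj
    hΦcomp hΦsurj u hu0 hu1 huO hurec ubar hubar
end

section
/- Let B be a complete nonarchimedean Banach Q_p-algebra with commuting continuous derivations ∂_τ (τ ∈ E_0, a finite set) and elements z_τ with ∂_τ(z_υ) = δ_{τυ}, such that the Taylor expansion theorem holds: every x ∈ B can be written x = Σ_{i ∈ N^{E_0}} x_i z^i with ∂_τ(x_i) = 0 and ‖x_i‖ ≤ p^{(n−1)|i|}‖x‖ for some fixed n ≥ 1 with ‖z_τ‖ ≤ p^{−n}. Then for each τ ∈ E_0 the derivation ∂_τ : B → B is surjective, with preimage of x given by z = Σ_i (x_i/(i_τ+1)) z^{i+1_τ}. -/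
private lemma aux_der_one {K B : Type*} [Field K] [CommRing B] [Module K B]
    (D : B →ₗ[K] B) (hL : ∀ a b, D (a * b) = D a * b + a * D b) : D 1 = 0 := by
  have h := hL 1 1
  simp only [mul_one, one_mul] at h
  exact (left_eq_add.mp h)

private lemma aux_der_pow_zero {K B : Type*} [Field K] [CommRing B] [Module K B]
    (D : B →ₗ[K] B) (hL : ∀ a b, D (a * b) = D a * b + a * D b)
    (w : B) (hw : D w = 0) : ∀ k, D (w ^ k) = 0 := by
  intro k
  induction k with
  | zero => simpa using aux_der_one D hL
  | succ k ih => rw [pow_succ, hL, ih, hw, zero_mul, mul_zero, add_zero]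

private lemma aux_der_pow_one {K B : Type*} [Field K] [CommRing B] [Module K B]
    (D : B →ₗ[K] B) (hL : ∀ a b, D (a * b) = D a * b + a * D b)
    (w : B) (hw : D w = 1) (k : ℕ) : D (w ^ (k + 1)) = (k + 1) • w ^ k := by
  induction k with
  | zero => simp [hw, pow_one, aux_der_one D hL]
  | succ k ih =>
    rw [pow_succ, hL, ih, hw, mul_one, smul_mul_assoc, ← pow_succ]
    conv_rhs => rw [succ_nsmul]

private lemma aux_der_prod_zero {K B : Type*} [Field K] [CommRing B] [Module K B]
    (D : B →ₗ[K] B) (hL : ∀ a b, D (a * b) = D a * b + a * D b)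
    {ι : Type*} (s : Finset ι) (f : ι → B) (hf : ∀ a ∈ s, D (f a) = 0) :
    D (∏ a ∈ s, f a) = 0 := by
  classical
  induction s using Finset.cons_induction with
  | empty => simpa using aux_der_one D hL
  | cons a s ha ih =>
    rw [Finset.prod_cons, hL, hf a (Finset.mem_cons_self a s),
      ih fun b hb => hf b (Finset.mem_cons_of_mem hb), zero_mul, mul_zero, add_zero]

private lemma aux_padic_inv_norm (p : ℕ) [Fact p.Prime] (m : ℕ) :
    ‖(((m + 1 : ℕ) : ℚ_[p]))⁻¹‖ ≤ (m : ℝ) + 1 := by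
  have hm : ((m + 1 : ℕ) : ℚ_[p]) ≠ 0 := Nat.cast_ne_zero.2 (Nat.succ_ne_zero m)
  rw [norm_inv, Padic.norm_eq_zpow_neg_valuation hm, Padic.valuation_natCast, ← zpow_neg, neg_neg,
    zpow_natCast]
  have h1 : p ^ padicValNat p (m + 1) ≤ m + 1 :=
    Nat.le_of_dvd (Nat.succ_pos m) pow_padicValNat_dvd
  exact_mod_cast h1

private lemma aux_norm_prod_pow {B : Type*} [NormedCommRing B] {ι : Type*} [Fintype ι]
    (z : ι → B) (c : ℝ) (hz : ∀ i, ‖z i‖ ≤ c) (m : ι → ℕ) (τ : ι) (hτ : m τ ≠ 0) :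
    ‖∏ i, z i ^ m i‖ ≤ c ^ (∑ i, m i) := by
  classical
  have hc : 0 ≤ c := le_trans (norm_nonneg _) (hz τ)
  set s := Finset.univ.filter (fun i => m i ≠ 0) with hs
  have hτs : τ ∈ s := by simp [hs, hτ]
  have hprod : ∏ i, z i ^ m i = ∏ i ∈ s, z i ^ m i := by
    refine (Finset.prod_subset (Finset.subset_univ s) ?_).symm
    intro i _ hi
    have : m i = 0 := by
      by_contra h
      exact hi (by simp [hs, h])
    simp [this]
  have hsum : ∑ i, m i = ∑ i ∈ s, m i := by
    refine (Finset.sum_subset (Finset.subset_univ s) ?_).symm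
    intro i _ hi
    by_contra h
    exact hi (by simp [hs, h])
  rw [hprod, hsum]
  calc ‖∏ i ∈ s, z i ^ m i‖ ≤ ∏ i ∈ s, ‖z i ^ m i‖ := Finset.norm_prod_le' s ⟨τ, hτs⟩ _
    _ ≤ ∏ i ∈ s, c ^ m i := by
        refine Finset.prod_le_prod (fun i _ => norm_nonneg _) (fun i hi => ?_)
        have hmi : 0 < m i := Nat.pos_of_ne_zero (by simpa [hs] using hi)
        exact (norm_pow_le' _ hmi).trans (pow_le_pow_left₀ (norm_nonneg _) (hz i) _)
    _ = c ^ ∑ i ∈ s, m i := Finset.prod_pow_eq_pow_sum s m c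

private lemma aux_summable_fin : ∀ (m : ℕ) (h : Fin m → ℕ → ℝ),
    (∀ j k, 0 ≤ h j k) → (∀ j, Summable (h j)) →
    Summable (fun f : Fin m → ℕ => ∏ j, h j (f j)) := by
  intro m
  induction m with
  | zero =>
    intro h _ _
    exact ⟨_, hasSum_single (f := fun f : Fin 0 → ℕ => ∏ j, h j (f j)) (fun _ => 0)
      fun b hb => absurd (funext fun j => j.elim0) hb⟩
  | succ m ih =>
    intro h h0 hs
    have hF : Summable (fun q : ℕ × (Fin m → ℕ) => h 0 q.1 * ∏ j, h (Fin.succ j) (q.2 j)) :=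
      Summable.mul_of_nonneg (f := h 0)
        (g := fun f : Fin m → ℕ => ∏ j, h (Fin.succ j) (f j)) (hs 0)
        (ih (fun j => h (Fin.succ j)) (fun j k => h0 _ _) (fun j => hs _))
        (fun k => h0 0 k) (fun f => Finset.prod_nonneg fun j _ => h0 _ _)
    rw [← Equiv.summable_iff (Fin.consEquiv (fun _ : Fin (m + 1) => ℕ))]
    refine hF.congr fun q => ?_
    simp only [Function.comp_apply, Fin.consEquiv_apply]
    rw [Fin.prod_univ_succ]
    simp

private lemma aux_summable_pi {ι : Type*} [Fintype ι] (h : ι → ℕ → ℝ)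
    (h0 : ∀ j k, 0 ≤ h j k) (hs : ∀ j, Summable (h j)) :
    Summable (fun f : ι → ℕ => ∏ j, h j (f j)) := by
  classical
  obtain e := Fintype.equivFin ι
  have haux := aux_summable_fin (Fintype.card ι) (fun j => h (e.symm j))
    (fun j k => h0 _ _) (fun j => hs _)
  have hE : Summable ((fun g : Fin (Fintype.card ι) → ℕ => ∏ j, h (e.symm j) (g j)) ∘
      (Equiv.arrowCongr e (Equiv.refl ℕ))) :=
    ((Equiv.arrowCongr e (Equiv.refl ℕ)).summable_iff).mpr haux
  refine hE.congr fun f => ?_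
  show ∏ j, h (e.symm j) ((Equiv.arrowCongr e (Equiv.refl ℕ)) f j) = ∏ j, h j (f j)
  simp only [Equiv.arrowCongr_apply, Function.comp, Equiv.refl_apply]
  exact Equiv.prod_comp e.symm (fun i => h i (f i))

/-- In a complete nonarchimedean Banach `ℚ_p`-algebra `B` with commuting
continuous derivations `D τ` (`τ ∈ E0`, finite) and elements `z τ` with `D τ (z υ) = δ_{τυ}`,
suppose the Taylor expansion theorem holds: every `x` can be written `x = Σ_i x_i z^i` with
`D τ (x_i) = 0` and `‖x_i‖ ≤ p^{(n−1)|i|}‖x‖`, where `‖z τ‖ ≤ p^{−n}` for some fixed `n ≥ 1`.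
Then each `D τ` is surjective, with a preimage of `x` given by
`Σ_i (x_i/(i_τ+1)) z^{i+1_τ}`. -/
theorem statement15 (p : ℕ) [Fact p.Prime]
    (B : Type*) [NormedCommRing B] [NormedAlgebra ℚ_[p] B] [CompleteSpace B]
    (E0 : Type*) [Fintype E0] [DecidableEq E0]
    (z : E0 → B)
    (D : E0 → B →ₗ[ℚ_[p]] B)
    (hLeib : ∀ (τ : E0) (a b : B), D τ (a * b) = D τ a * b + a * D τ b)
    (hcomm : ∀ τ υ : E0, (D τ).comp (D υ) = (D υ).comp (D τ))
    (hDcont : ∀ τ : E0, Continuous (D τ))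
    (hδ : ∀ τ υ : E0, D τ (z υ) = if τ = υ then 1 else 0)
    (n : ℕ) (hn : 1 ≤ n)
    (hz : ∀ τ : E0, ‖z τ‖ ≤ (p : ℝ) ^ (-(n : ℤ)))
    (hTaylor : ∀ x : B, ∃ xc : (E0 → ℕ) → B,
      (∀ (i : E0 → ℕ) (τ : E0), D τ (xc i) = 0) ∧
      (∀ i : E0 → ℕ, ‖xc i‖ ≤ (((p : ℝ) ^ ((n : ℤ) - 1)) ^ (∑ τ, i τ)) * ‖x‖) ∧
      HasSum (fun i : E0 → ℕ => xc i * ∏ τ, z τ ^ i τ) x) :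
    ∀ τ : E0, Function.Surjective (D τ) ∧
      ∀ (x : B) (xc : (E0 → ℕ) → B),
        (∀ (i : E0 → ℕ) (τ' : E0), D τ' (xc i) = 0) →
        (∀ i : E0 → ℕ, ‖xc i‖ ≤ (((p : ℝ) ^ ((n : ℤ) - 1)) ^ (∑ τ', i τ')) * ‖x‖) →
        HasSum (fun i : E0 → ℕ => xc i * ∏ τ', z τ' ^ i τ') x →
        ∃ y : B,
          HasSum (fun i : E0 → ℕ =>
            (((i τ + 1 : ℕ) : ℚ_[p]))⁻¹ •
              (xc i * ∏ τ', z τ' ^ (i τ' + if τ' = τ then 1 else 0))) y ∧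
          D τ y = x := by
  intro τ
  have hp1 : (1 : ℝ) < p := by exact_mod_cast (Fact.out : p.Prime).one_lt
  have hp0 : (0 : ℝ) < p := lt_trans one_pos hp1
  have hpne : (p : ℝ) ≠ 0 := hp0.ne'
  set r : ℝ := (p : ℝ)⁻¹ with hr
  have hr0 : 0 ≤ r := inv_nonneg.2 hp0.le
  have hr1 : r < 1 := by rw [hr, inv_lt_one₀ hp0]; exact hp1
  have hcn0 : (0 : ℝ) < (p : ℝ) ^ (-(n : ℤ)) := zpow_pos hp0 _
  have hq0 : (0 : ℝ) < (p : ℝ) ^ ((n : ℤ) - 1) := zpow_pos hp0 _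
  have hkey : ∀ S : ℕ, ((p : ℝ) ^ ((n : ℤ) - 1)) ^ S * ((p : ℝ) ^ (-(n : ℤ))) ^ (S + 1)
      = r ^ S * (p : ℝ) ^ (-(n : ℤ)) := by
    intro S
    rw [hr, inv_pow, ← zpow_natCast ((p : ℝ) ^ ((n : ℤ) - 1)) S,
      ← zpow_natCast ((p : ℝ) ^ (-(n : ℤ))) (S + 1),
      ← zpow_mul, ← zpow_mul, ← zpow_add₀ hpne, ← zpow_natCast (p : ℝ) S, ← zpow_neg,
      ← zpow_add₀ hpne]
    congr 1
    push_cast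
    ring
  have key : ∀ (x : B) (xc : (E0 → ℕ) → B),
      (∀ (i : E0 → ℕ) (τ' : E0), D τ' (xc i) = 0) →
      (∀ i : E0 → ℕ, ‖xc i‖ ≤ (((p : ℝ) ^ ((n : ℤ) - 1)) ^ (∑ τ', i τ')) * ‖x‖) →
      HasSum (fun i : E0 → ℕ => xc i * ∏ τ', z τ' ^ i τ') x →
      ∃ y : B,
        HasSum (fun i : E0 → ℕ =>
          (((i τ + 1 : ℕ) : ℚ_[p]))⁻¹ •
            (xc i * ∏ τ', z τ' ^ (i τ' + if τ' = τ then 1 else 0))) y ∧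
        D τ y = x := by
    intro x xc hc0 hcn hcs
    set f : (E0 → ℕ) → B := fun i =>
      (((i τ + 1 : ℕ) : ℚ_[p]))⁻¹ •
        (xc i * ∏ τ', z τ' ^ (i τ' + if τ' = τ then 1 else 0)) with hf
    -- the majorant
    set h : E0 → ℕ → ℝ := fun τ' k => (if τ' = τ then ((k : ℝ) + 1) else 1) * r ^ k with hh
    have hh0 : ∀ j k, 0 ≤ h j k := by
      intro j k
      rw [hh]
      positivity
    have hhs : ∀ j, Summable (h j) := by
      intro j
      by_cases hj : j = τ
      · have h1 : Summable fun k : ℕ => (k : ℝ) * r ^ k := by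
          have := summable_pow_mul_geometric_of_norm_lt_one (R := ℝ) 1
            (r := r) (by rw [Real.norm_eq_abs, abs_of_nonneg hr0]; exact hr1)
          simpa using this
        have h2 : Summable fun k : ℕ => r ^ k := summable_geometric_of_lt_one hr0 hr1
        refine (h1.add h2).congr fun k => ?_
        simp [hh, hj, add_mul]
      · refine (summable_geometric_of_lt_one hr0 hr1).congr fun k => ?_
        simp [hh, hj]
    have hSm : ∀ i : E0 → ℕ,
        (∑ τ', (i τ' + if τ' = τ then 1 else 0)) = (∑ τ', i τ') + 1 := by
      intro i
      rw [Finset.sum_add_distrib]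
      congr 1
      simp
    have hprodh : ∀ i : E0 → ℕ,
        (∏ τ', h τ' (i τ')) = ((i τ : ℝ) + 1) * r ^ (∑ τ', i τ') := by
      intro i
      rw [hh]
      simp only []
      rw [Finset.prod_mul_distrib, Finset.prod_pow_eq_pow_sum]
      congr 1
      simp
    have hbound : ∀ i : E0 → ℕ,
        ‖f i‖ ≤ (∏ τ', h τ' (i τ')) * ((p : ℝ) ^ (-(n : ℤ)) * ‖x‖) := by
      intro i
      have hP : ‖∏ τ', z τ' ^ (i τ' + if τ' = τ then 1 else 0)‖
          ≤ ((p : ℝ) ^ (-(n : ℤ))) ^ ((∑ τ', i τ') + 1) := by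
        rw [← hSm i]
        exact aux_norm_prod_pow z _ hz _ τ (by simp)
      have h1 : ‖f i‖ ≤ ‖(((i τ + 1 : ℕ) : ℚ_[p]))⁻¹‖ *
          ‖xc i * ∏ τ', z τ' ^ (i τ' + if τ' = τ then 1 else 0)‖ := norm_smul_le _ _
      have h2 : ‖xc i * ∏ τ', z τ' ^ (i τ' + if τ' = τ then 1 else 0)‖
          ≤ ((((p : ℝ) ^ ((n : ℤ) - 1)) ^ (∑ τ', i τ')) * ‖x‖) *
            ((p : ℝ) ^ (-(n : ℤ))) ^ ((∑ τ', i τ') + 1) :=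
        (norm_mul_le _ _).trans (mul_le_mul (hcn i) hP (norm_nonneg _) (by positivity))
      have h3 : ‖(((i τ + 1 : ℕ) : ℚ_[p]))⁻¹‖ ≤ (i τ : ℝ) + 1 := aux_padic_inv_norm p (i τ)
      calc ‖f i‖ ≤ ((i τ : ℝ) + 1) *
            (((((p : ℝ) ^ ((n : ℤ) - 1)) ^ (∑ τ', i τ')) * ‖x‖) *
              ((p : ℝ) ^ (-(n : ℤ))) ^ ((∑ τ', i τ') + 1)) :=
          h1.trans (mul_le_mul h3 h2 (norm_nonneg _) (by positivity))
        _ = (∏ τ', h τ' (i τ')) * ((p : ℝ) ^ (-(n : ℤ)) * ‖x‖) := by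
          rw [hprodh i]
          linear_combination ((i τ : ℝ) + 1) * ‖x‖ * hkey (∑ τ', i τ')
    have hg : Summable (fun i : E0 → ℕ =>
        (∏ τ', h τ' (i τ')) * ((p : ℝ) ^ (-(n : ℤ)) * ‖x‖)) :=
      (aux_summable_pi h hh0 hhs).mul_right _
    have hsumf : Summable f :=
      Summable.of_norm (hg.of_nonneg_of_le (fun i => norm_nonneg _) hbound)
    obtain ⟨y, hy⟩ := hsumf
    refine ⟨y, hy, ?_⟩
    have hterm : ∀ i : E0 → ℕ, D τ (f i) = xc i * ∏ τ', z τ' ^ i τ' := by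
      intro i
      have hc : ((i τ + 1 : ℕ) : ℚ_[p]) ≠ 0 := Nat.cast_ne_zero.2 (Nat.succ_ne_zero _)
      have hR : D τ (∏ τ' ∈ Finset.univ.erase τ, z τ' ^ i τ') = 0 := by
        refine aux_der_prod_zero (D τ) (hLeib τ) _ _ fun τ' hτ' => ?_
        have hne : τ ≠ τ' := fun hEq => (Finset.ne_of_mem_erase hτ') hEq.symm
        exact aux_der_pow_zero (D τ) (hLeib τ) (z τ') (by rw [hδ τ τ', if_neg hne]) (i τ')
      have hsplit : (∏ τ', z τ' ^ (i τ' + if τ' = τ then 1 else 0))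
          = z τ ^ (i τ + 1) * ∏ τ' ∈ Finset.univ.erase τ, z τ' ^ i τ' := by
        rw [← Finset.mul_prod_erase Finset.univ
          (fun τ' => z τ' ^ (i τ' + if τ' = τ then 1 else 0)) (Finset.mem_univ τ)]
        congr 1
        · simp
        · exact Finset.prod_congr rfl fun τ' hτ' => by simp [Finset.ne_of_mem_erase hτ']
      have hmain : D τ (xc i * ∏ τ', z τ' ^ (i τ' + if τ' = τ then 1 else 0))
          = ((i τ + 1 : ℕ) : ℚ_[p]) • (xc i * ∏ τ', z τ' ^ i τ') := by
        rw [hsplit, hLeib, hc0 i τ, zero_mul, zero_add, hLeib,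
          aux_der_pow_one (D τ) (hLeib τ) (z τ) (by rw [hδ τ τ, if_pos rfl]) (i τ),
          hR, mul_zero, add_zero, smul_mul_assoc,
          ← Finset.mul_prod_erase Finset.univ (fun τ' => z τ' ^ i τ') (Finset.mem_univ τ),
          mul_smul_comm, Nat.cast_smul_eq_nsmul (R := ℚ_[p])]
      show D τ ((((i τ + 1 : ℕ) : ℚ_[p]))⁻¹ •
          (xc i * ∏ τ', z τ' ^ (i τ' + if τ' = τ then 1 else 0))) = _
      rw [map_smul, hmain, smul_smul, inv_mul_cancel₀ hc, one_smul]
    have hDy := hy.map (D τ).toAddMonoidHom (hDcont τ)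
    have heq : ((D τ).toAddMonoidHom ∘ f) = fun i : E0 → ℕ => xc i * ∏ τ', z τ' ^ i τ' := by
      funext i
      exact hterm i
    rw [heq] at hDy
    exact hDy.unique hcs
  refine ⟨fun x => ?_, key⟩
  obtain ⟨xc, h1, h2, h3⟩ := hTaylor x
  obtain ⟨y, -, hDy⟩ := key x xc h1 h2 h3
  exact ⟨y, hDy⟩
end

section
/- Let ψ_q : B^{[r;s]}_K → B^{[r/q;s/q]}_K be a continuous left inverse of φ_q (i.e., ψ_q(φ_q(x)) = x) satisfying V(ψ_q(x), [r/q;s/q]) ≥ V(x,[r;s]) − h. If x ∈ B^{[r;s]}_K and φ_q^m(x) ∈ B^{[q^m r; q^m t]}_K for some t ≥ s, then x ∈ B^{[r;t]}_K. -/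
/-- Let `ψ_q` be a continuous left inverse of `φ_q` on the family of rings
`B^{[a;b]}_K` (presented as subrings `Bsub a b` of a common ambient ring `A`), satisfying
`ψ_q(φ_q(x)) = x`, `ψ_q(B^{[qa;qb]}_K) ⊆ B^{[a;b]}_K` and the valuation estimate
`V(ψ_q(x),[a;b]) ≥ V(x,[qa;qb]) − h`.  If `r ≥ max(r(K),(p−1)e/p)`, `x ∈ B^{[r;s]}_K` and
`φ_q^m(x) ∈ B^{[q^m r; q^m t]}_K` for some `t ≥ s`, then `x ∈ B^{[r;t]}_K`. -/
theorem statement18 (p q e h : ℕ) (hp : p.Prime) (hq : 2 ≤ q) (he : 1 ≤ e)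
    (A : Type*) [CommRing A]
    (rK : ℝ) (Bsub : ℝ → ℝ → Subring A)
    (φ : A →+* A) (ψ : A → A)
    (V : ℝ → ℝ → A → ℝ)
    (hψφ : ∀ x : A, ψ (φ x) = x)
    (hφmap : ∀ a b : ℝ, rK ≤ a → a ≤ b →
      ∀ x ∈ Bsub a b, φ x ∈ Bsub ((q : ℝ) * a) ((q : ℝ) * b))
    (hψmap : ∀ a b : ℝ, rK ≤ a → a ≤ b →
      ∀ x ∈ Bsub ((q : ℝ) * a) ((q : ℝ) * b), ψ x ∈ Bsub a b)
    (hψV : ∀ (a b : ℝ) (x : A), rK ≤ a → a ≤ b →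
      V ((q : ℝ) * a) ((q : ℝ) * b) x - (h : ℝ) ≤ V a b (ψ x))
    (r s t : ℝ)
    (hr : max rK (((p : ℝ) - 1) * (e : ℝ) / (p : ℝ)) ≤ r)
    (hrs : r ≤ s) (hst : s ≤ t)
    (m : ℕ) (x : A)
    (hx : x ∈ Bsub r s)
    (hφx : (⇑φ)^[m] x ∈ Bsub ((q : ℝ) ^ m * r) ((q : ℝ) ^ m * t)) :
    x ∈ Bsub r t := by
  have hq1 : (1 : ℝ) ≤ (q : ℝ) := by exact_mod_cast Nat.one_le_of_lt hq
  -- key: ψ^[m] maps Bsub (q^m a) (q^m b) into Bsub a b for nonneg a ≥ rK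
  have key : ∀ (m : ℕ) (a b : ℝ), rK ≤ a → 0 ≤ a → a ≤ b →
      ∀ y ∈ Bsub ((q : ℝ) ^ m * a) ((q : ℝ) ^ m * b), (ψ)^[m] y ∈ Bsub a b := by
    intro m
    induction m with
    | zero => intro a b _ _ _ y hy; simpa using hy
    | succ n ih =>
      intro a b ha ha0 hab y hy
      have hqa : rK ≤ (q : ℝ) ^ n * a := by
        calc rK ≤ a := ha
        _ ≤ (q : ℝ) ^ n * a := le_mul_of_one_le_left ha0 (one_le_pow₀ hq1)
      have hqab : (q : ℝ) ^ n * a ≤ (q : ℝ) ^ n * b :=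
        mul_le_mul_of_nonneg_left hab (by positivity)
      rw [Function.iterate_succ_apply]
      apply ih a b ha ha0 hab
      apply hψmap _ _ hqa hqab
      have e1 : (q : ℝ) * ((q : ℝ) ^ n * a) = (q : ℝ) ^ (n + 1) * a := by ring
      have e2 : (q : ℝ) * ((q : ℝ) ^ n * b) = (q : ℝ) ^ (n + 1) * b := by ring
      rw [e1, e2]
      exact hy
  have hp2 : (2 : ℝ) ≤ (p : ℝ) := by exact_mod_cast hp.two_le
  have hr0 : 0 ≤ r := by
    have : (0 : ℝ) ≤ ((p : ℝ) - 1) * (e : ℝ) / (p : ℝ) := by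
      apply div_nonneg _ (by linarith)
      have : (1 : ℝ) ≤ (e : ℝ) := by exact_mod_cast he
      nlinarith
    linarith [le_trans (le_max_right rK _) hr, this]
  have hrK : rK ≤ r := le_trans (le_max_left _ _) hr
  have := key m r t hrK hr0 (le_trans hrs hst) _ hφx
  rwa [Function.LeftInverse.iterate hψφ m x] at this
end
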